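/- arXiv:2412.12325 — 10 statements merged into one kernel-verified Lean document; each statement's English description precedes it below -/
import Mathlib

section
/- Let a₁₁, a₁₂, a₂₁, a₂₂ be real numbers and μ̂, δ̂, χ̂ ≥ 0 real parameters satisfying condition (C1) and condition (C2). Define the threshold ĉ*² := −Δ₂²·(μ̂δ̂ − a₂₁χ̂ − δ̂a₁₁ − μ̂a₂₂ + a₁₁a₂₂ − a₂₁a₁₂)/((δ̂ − a₂₂)(μ̂ − a₁₁)). Then: (i) Δ₂ > 0 for every ĉ ∈ ℝ; (ii) ĉ*² > 0; (iii) for every ĉ ∈ ℝ, if ĉ² < ĉ*² then Δ₄ > 0, and if ĉ² > ĉ*² then Δ₄ < 0. In particular the chain of signs of the Hankel minors 1, Δ₂, Δ₄ is +,+,+ for ĉ² < ĉ*² and +,+,− for ĉ² > ĉ*². -/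
/-- Hankel minors sign chain (Lemma 2 of the paper). -/
theorem hankel_sign_chain (a11 a12 a21 a22 μ δ χ : ℝ)
    (hμ : 0 ≤ μ) (hδ : 0 ≤ δ) (hχ : 0 ≤ χ)
    -- Condition (C1)
    (hC1a : 0 < a11 * a22 - a21 * a12) (hC1b : a11 + a22 < 0) (hC1c : a11 * a22 < 0)
    -- Condition (C2)
    (hC2a : (δ - a22) * (μ - a11) < 0)
    (hC2b : 0 < (δ - a22) * (μ - a11) - a21 * (a12 + χ))
    (Δ₂ cstar2 : ℝ)
    (hΔ₂ : Δ₂ = μ + δ - a11 - a22)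
    (hcstar2 : cstar2 =
      -Δ₂ ^ 2 * (μ * δ - a21 * χ - δ * a11 - μ * a22 + a11 * a22 - a21 * a12)
        / ((δ - a22) * (μ - a11))) :
    0 < Δ₂ ∧ 0 < cstar2 ∧
      ∀ c : ℝ,
        (c ^ 2 < cstar2 →
          0 < (c ^ 2 + Δ₂ ^ 2) * ((δ - a22) * (μ - a11)) - a21 * Δ₂ ^ 2 * (a12 + χ)) ∧
        (cstar2 < c ^ 2 →
          (c ^ 2 + Δ₂ ^ 2) * ((δ - a22) * (μ - a11)) - a21 * Δ₂ ^ 2 * (a12 + χ) < 0) := by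
  have hΔpos : 0 < Δ₂ := by rw [hΔ₂]; linarith
  have hPne : (δ - a22) * (μ - a11) ≠ 0 := ne_of_lt hC2a
  have hnum : μ * δ - a21 * χ - δ * a11 - μ * a22 + a11 * a22 - a21 * a12
      = (δ - a22) * (μ - a11) - a21 * (a12 + χ) := by ring
  have hcp : 0 < cstar2 := by
    rw [hcstar2, hnum, div_pos_iff]
    right
    constructor
    · nlinarith [mul_pos (pow_pos hΔpos 2) hC2b]
    · exact hC2a
  have key : ∀ c : ℝ, (c ^ 2 + Δ₂ ^ 2) * ((δ - a22) * (μ - a11)) - a21 * Δ₂ ^ 2 * (a12 + χ)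
      = (c ^ 2 - cstar2) * ((δ - a22) * (μ - a11)) := by
    intro c
    rw [hcstar2]
    have := div_mul_cancel₀ (-Δ₂ ^ 2 * (μ * δ - a21 * χ - δ * a11 - μ * a22 + a11 * a22 - a21 * a12)) hPne
    linear_combination this
  refine ⟨hΔpos, hcp, fun c => ⟨fun h => ?_, fun h => ?_⟩⟩
  · rw [key]; nlinarith
  · rw [key]; nlinarith
end

section
/- Let a₁₁, a₁₂, a₂₁, a₂₂ be real numbers, μ̂, δ̂, χ̂ ≥ 0 and ĉ ∈ ℝ, and let A(ĉ) be the stability matrix. If Δ₂ > 0 and Δ₄ > 0, then every eigenvalue of A(ĉ) (over ℂ) has negative real part. If Δ₂ > 0 and Δ₄ < 0, then A(ĉ) has exactly one eigenvalue with positive real part. -/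
/-- The stability matrix `A(ĉ)` of the linearized leading slow system. -/
noncomputable def stabMatrix (a11 a12 a21 a22 μ δ χ c : ℝ) : Matrix (Fin 2) (Fin 2) ℂ :=
  !![(a11 : ℂ) - (μ : ℂ) - Complex.I * (c : ℂ), (a12 : ℂ) + (χ : ℂ);
     (a21 : ℂ), (a22 : ℂ) - (δ : ℂ)]

/-- `lam` is an eigenvalue of `A` iff `det (A - lam • I) = 0`. -/
def IsEigenvalue (A : Matrix (Fin 2) (Fin 2) ℂ) (lam : ℂ) : Prop :=
  (A - lam • (1 : Matrix (Fin 2) (Fin 2) ℂ)).det = 0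

/-- the Hankel minors count the eigenvalues with positive real part. -/
theorem hankel_minors_count_unstable_eigenvalues
    (a11 a12 a21 a22 μ δ χ c : ℝ)
    (hμ : 0 ≤ μ) (hδ : 0 ≤ δ) (hχ : 0 ≤ χ)
    (Δ₂ Δ₄ : ℝ)
    (hΔ₂ : Δ₂ = μ + δ - a11 - a22)
    (hΔ₄ : Δ₄ = (c ^ 2 + Δ₂ ^ 2) * ((δ - a22) * (μ - a11)) - a21 * Δ₂ ^ 2 * (a12 + χ)) :
    (0 < Δ₂ → 0 < Δ₄ →
      ∀ lam : ℂ, IsEigenvalue (stabMatrix a11 a12 a21 a22 μ δ χ c) lam → lam.re < 0) ∧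
    (0 < Δ₂ → Δ₄ < 0 →
      ∃! lam : ℂ, IsEigenvalue (stabMatrix a11 a12 a21 a22 μ δ χ c) lam ∧ 0 < lam.re) := by
  -- trace and determinant of the matrix
  set T : ℂ := ((a11 : ℂ) - (μ : ℂ) - Complex.I * (c : ℂ)) + ((a22 : ℂ) - (δ : ℂ)) with hT
  set D : ℂ := ((a11 : ℂ) - (μ : ℂ) - Complex.I * (c : ℂ)) * ((a22 : ℂ) - (δ : ℂ))
      - ((a12 : ℂ) + (χ : ℂ)) * (a21 : ℂ) with hD
  obtain ⟨w, hw⟩ := IsAlgClosed.exists_pow_nat_eq (T ^ 2 - 4 * D) (n := 2) (by norm_num)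
  have hsum : (T + w) / 2 + (T - w) / 2 = T := by ring
  have hprod : (T + w) / 2 * ((T - w) / 2) = D := by linear_combination (-(1 : ℂ)/4) * hw
  set l1 : ℂ := (T + w) / 2 with hl1
  set l2 : ℂ := (T - w) / 2 with hl2
  clear_value l1 l2
  clear hl1 hl2 hw
  -- eigenvalues are exactly l1 and l2
  have heig : ∀ lam : ℂ, IsEigenvalue (stabMatrix a11 a12 a21 a22 μ δ χ c) lam ↔
      lam = l1 ∨ lam = l2 := by
    intro lam
    have hdet : (stabMatrix a11 a12 a21 a22 μ δ χ c - lam • (1 : Matrix (Fin 2) (Fin 2) ℂ)).det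
        = (lam - l1) * (lam - l2) := by
      simp [stabMatrix, Matrix.det_fin_two, Matrix.sub_apply, Matrix.smul_apply,
        Matrix.one_apply]
      linear_combination lam * hsum - hprod
    rw [IsEigenvalue, hdet, mul_eq_zero, sub_eq_zero, sub_eq_zero]
  -- real and imaginary parts of the trace/determinant relations
  have h1 : l1.re + l2.re = a11 - μ + (a22 - δ) := by
    have := congrArg Complex.re hsum
    simpa [hT] using this
  have h2 : l1.im + l2.im = -c := by
    have := congrArg Complex.im hsum
    simpa [hT] using this
  have h3 : l1.re * l2.re - l1.im * l2.im = (a11 - μ) * (a22 - δ) - a21 * (a12 + χ) := by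
    have := congrArg Complex.re hprod
    simp [hD, Complex.mul_re] at this
    linarith
  have h4 : l1.re * l2.im + l1.im * l2.re = -(c * (a22 - δ)) := by
    have := congrArg Complex.im hprod
    simp [hD, Complex.mul_im] at this
    linarith
  -- the key Hankel identity
  have hkey : Δ₄ = l1.re * l2.re * ((l1.re + l2.re) ^ 2 + (l1.im - l2.im) ^ 2) := by
    have e1 : l1.re * l2.re * ((l1.re + l2.re) ^ 2 + (l1.im - l2.im) ^ 2)
        = (l1.re * l2.re - l1.im * l2.im) * (l1.re + l2.re) ^ 2
          + (l1.im + l2.im) * (l1.re + l2.re) * (l1.re * l2.im + l1.im * l2.re)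
          - (l1.re * l2.im + l1.im * l2.re) ^ 2 := by ring
    rw [e1, h3, h2, h4, h1, hΔ₄, hΔ₂]
    ring
  have hS : l1.re + l2.re = -Δ₂ := by rw [hΔ₂] at *; linarith
  constructor
  · -- both eigenvalues stable
    intro hΔ₂pos hΔ₄pos lam hlam
    have hF : 0 ≤ (l1.re + l2.re) ^ 2 + (l1.im - l2.im) ^ 2 := by positivity
    have hP : 0 < l1.re * l2.re := by nlinarith
    have hx1 : l1.re < 0 := by nlinarith
    have hx2 : l2.re < 0 := by nlinarith
    rcases (heig lam).mp hlam with rfl | rfl <;> assumption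
  · -- exactly one unstable eigenvalue
    intro hΔ₂pos hΔ₄neg
    have hF : 0 ≤ (l1.re + l2.re) ^ 2 + (l1.im - l2.im) ^ 2 := by positivity
    have hP : l1.re * l2.re < 0 := by nlinarith
    rcases lt_trichotomy l1.re 0 with hx1 | hx1 | hx1
    · have hx2 : 0 < l2.re := by nlinarith
      refine ⟨l2, ⟨(heig l2).mpr (Or.inr rfl), hx2⟩, ?_⟩
      rintro y ⟨hy, hyre⟩
      rcases (heig y).mp hy with rfl | rfl
      · linarith
      · rfl
    · exfalso; rw [hx1] at hP; simp at hP
    · have hx2 : l2.re < 0 := by nlinarith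
      refine ⟨l1, ⟨(heig l1).mpr (Or.inl rfl), hx1⟩, ?_⟩
      rintro y ⟨hy, hyre⟩
      rcases (heig y).mp hy with rfl | rfl
      · rfl
      · linarith
end

section
/- Let a₁₁, a₁₂, a₂₁, a₂₂ be real numbers and μ̂, δ̂, χ̂ ≥ 0 real parameters satisfying condition (C1) and condition (C2). Define ĉ*² := −Δ₂²·(μ̂δ̂ − a₂₁χ̂ − δ̂a₁₁ − μ̂a₂₂ + a₁₁a₂₂ − a₂₁a₁₂)/((δ̂ − a₂₂)(μ̂ − a₁₁)). Then ĉ*² > 0, and for every ĉ ∈ ℝ: if ĉ² < ĉ*² then every eigenvalue of the stability matrix A(ĉ) has negative real part (the mode is stable), while if ĉ² > ĉ*² then A(ĉ) has an eigenvalue with positive real part (the mode is unstable). -/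
set_option maxHeartbeats 1600000 in
/-- below the threshold `ĉ*²` every mode is stable, above it the mode is
unstable. -/
theorem stability_threshold (a11 a12 a21 a22 μ δ χ : ℝ)
    (hμ : 0 ≤ μ) (hδ : 0 ≤ δ) (hχ : 0 ≤ χ)
    -- Condition (C1)
    (hC1a : 0 < a11 * a22 - a21 * a12) (hC1b : a11 + a22 < 0) (hC1c : a11 * a22 < 0)
    -- Condition (C2)
    (hC2a : (δ - a22) * (μ - a11) < 0)
    (hC2b : 0 < (δ - a22) * (μ - a11) - a21 * (a12 + χ))
    (Δ₂ cstar2 : ℝ)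
    (hΔ₂ : Δ₂ = μ + δ - a11 - a22)
    (hcstar2 : cstar2 =
      -Δ₂ ^ 2 * (μ * δ - a21 * χ - δ * a11 - μ * a22 + a11 * a22 - a21 * a12)
        / ((δ - a22) * (μ - a11))) :
    0 < cstar2 ∧
      ∀ c : ℝ,
        (c ^ 2 < cstar2 →
          ∀ lam : ℂ, IsEigenvalue (stabMatrix a11 a12 a21 a22 μ δ χ c) lam → lam.re < 0) ∧
        (cstar2 < c ^ 2 →
          ∃ lam : ℂ, IsEigenvalue (stabMatrix a11 a12 a21 a22 μ δ χ c) lam ∧ 0 < lam.re) := by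
  subst hΔ₂
  obtain ⟨σ, hσdef⟩ : ∃ t : ℝ, t = a11 - μ + a22 - δ := ⟨_, rfl⟩
  obtain ⟨pq, hpqdef⟩ : ∃ t : ℝ, t = (a11 - μ) * (a22 - δ) := ⟨_, rfl⟩
  obtain ⟨K, hKdef⟩ : ∃ t : ℝ, t = a21 * (a12 + χ) := ⟨_, rfl⟩
  have hσ : σ < 0 := by rw [hσdef]; linarith
  have hσ2 : 0 < σ ^ 2 := by nlinarith
  have hpq : pq < 0 := by rw [hpqdef]; nlinarith [hC2a]
  have hKlt : K - pq < 0 := by rw [hKdef, hpqdef]; nlinarith [hC2b]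
  have hkey : cstar2 * pq = σ ^ 2 * (K - pq) := by
    rw [hcstar2, hpqdef, hKdef, hσdef]
    rw [div_mul_eq_mul_div, div_eq_iff (by nlinarith [hC2a] : (δ - a22) * (μ - a11) ≠ 0)]
    ring
  have hcpos : 0 < cstar2 := by
    have h1 : 0 < σ ^ 2 * (K - pq) / pq := div_pos_of_neg_of_neg (by nlinarith) hpq
    have h2 : cstar2 = σ ^ 2 * (K - pq) / pq := (eq_div_iff hpq.ne).mpr hkey
    linarith [h2 ▸ h1]
  refine ⟨hcpos, fun c => ?_⟩
  obtain ⟨T, hT⟩ : ∃ t : ℂ, t = ((a11 : ℂ) - μ + a22 - δ) - Complex.I * c := ⟨_, rfl⟩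
  obtain ⟨D, hD⟩ : ∃ t : ℂ,
      t = ((a11 : ℂ) - μ - Complex.I * c) * ((a22 : ℂ) - δ) - ((a12 : ℂ) + χ) * a21 := ⟨_, rfl⟩
  have hdet : ∀ lam : ℂ, IsEigenvalue (stabMatrix a11 a12 a21 a22 μ δ χ c) lam ↔
      lam ^ 2 - T * lam + D = 0 := by
    intro lam
    have heq : (stabMatrix a11 a12 a21 a22 μ δ χ c - lam • (1 : Matrix (Fin 2) (Fin 2) ℂ)).det =
        lam ^ 2 - T * lam + D := by
      rw [Matrix.det_fin_two, hT, hD]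
      simp [stabMatrix, Matrix.sub_apply, Matrix.smul_apply, Matrix.one_apply]
      ring
    rw [IsEigenvalue, heq]
  obtain ⟨w, hw⟩ := Complex.isAlgClosed.exists_pow_nat_eq (T ^ 2 - 4 * D) (n := 2) (by norm_num)
  obtain ⟨s, hs, hsre⟩ : ∃ s : ℂ, s ^ 2 = T ^ 2 - 4 * D ∧ 0 ≤ s.re := by
    rcases le_or_gt 0 w.re with h | h
    · exact ⟨w, hw, h⟩
    · exact ⟨-w, by rw [neg_pow]; simpa using hw, by simp [Complex.neg_re]; linarith⟩
  obtain ⟨x, hxdef⟩ : ∃ t : ℝ, t = s.re := ⟨_, rfl⟩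
  obtain ⟨y, hydef⟩ : ∃ t : ℝ, t = s.im := ⟨_, rfl⟩
  rw [← hxdef] at hsre
  have hWre : x ^ 2 - y ^ 2 = σ ^ 2 - c ^ 2 - 4 * (pq - K) := by
    have h1 : (s ^ 2).re = x ^ 2 - y ^ 2 := by
      rw [pow_two, Complex.mul_re, hxdef, hydef]; ring
    rw [hs] at h1
    rw [← h1, hT, hD, hσdef, hpqdef, hKdef]
    simp [Complex.mul_re, Complex.mul_im, pow_two]
    ring
  have hWim : 2 * (x * y) = -2 * σ * c + 4 * (c * (a22 - δ)) := by
    have h1 : (s ^ 2).im = 2 * (x * y) := by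
      rw [pow_two, Complex.mul_im, hxdef, hydef]; ring
    rw [hs] at h1
    rw [← h1, hT, hD, hσdef]
    simp [Complex.mul_re, Complex.mul_im, pow_two]
    ring
  have hTre : T.re = σ := by rw [hT, hσdef]; simp
  have hid : 4 * ((x ^ 2 - σ ^ 2) * (y ^ 2 + σ ^ 2)) =
      16 * (σ ^ 2 * (K - pq) - c ^ 2 * pq) := by
    have h1 := hWre
    have h2 := hWim
    rw [hσdef, hpqdef, hKdef] at h1 ⊢
    rw [hσdef] at h2
    linear_combination (2 * (x * y) + (-2 * (a11 - μ + a22 - δ) * c + 4 * (c * (a22 - δ)))) * h2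
      + (4 * (a11 - μ + a22 - δ) ^ 2) * h1
  constructor
  · intro hc lam hlam
    rw [hdet] at hlam
    have hfac : (lam - (T + s) / 2) * (lam - (T - s) / 2) = 0 := by
      linear_combination hlam - (1/4) * hs
    have hG : σ ^ 2 * (K - pq) - c ^ 2 * pq < 0 := by
      have := mul_lt_mul_of_neg_right hc hpq
      nlinarith [hkey]
    have hx2 : x ^ 2 < σ ^ 2 := by
      have hprod : (x ^ 2 - σ ^ 2) * (y ^ 2 + σ ^ 2) < 0 := by linarith
      have h2 : 0 < y ^ 2 + σ ^ 2 := by positivity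
      nlinarith [hprod, h2]
    have hre : lam.re = (σ + x) / 2 ∨ lam.re = (σ - x) / 2 := by
      rcases mul_eq_zero.mp hfac with h | h
      · left
        rw [sub_eq_zero.mp h]
        simp [Complex.div_re, Complex.add_re, hTre, hxdef]
      · right
        rw [sub_eq_zero.mp h]
        simp [Complex.div_re, Complex.sub_re, hTre, hxdef]
    rcases hre with h | h <;> rw [h] <;> nlinarith [hx2, hσ]
  · intro hc
    refine ⟨(T + s) / 2, ?_, ?_⟩
    · rw [hdet]; linear_combination (1/4) * hs
    · have hG : 0 < σ ^ 2 * (K - pq) - c ^ 2 * pq := by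
        have := mul_lt_mul_of_neg_right hc hpq
        nlinarith [hkey]
      have hx2 : σ ^ 2 < x ^ 2 := by
        have hprod : 0 < (x ^ 2 - σ ^ 2) * (y ^ 2 + σ ^ 2) := by linarith
        have h2 : 0 < y ^ 2 + σ ^ 2 := by positivity
        nlinarith [hprod, h2]
      have hre2 : ((T + s) / 2).re = (σ + x) / 2 := by
        simp [Complex.div_re, Complex.add_re, hTre, hxdef]
      rw [hre2]
      nlinarith [hx2, hσ, hsre]
end

section
/- Let a₁₁, a₁₂, a₂₁, a₂₂ be real numbers with a₁₁ ≤ 0, a₂₂ ≤ 0, a₂₁ ≤ 0 and a₁₂ ≥ 0, at least three of these four inequalities being strict, and let μ̂, δ̂, χ̂ ≥ 0. Then for every ĉ ∈ ℝ, Δ₂ > 0 and Δ₄ > 0, and consequently every eigenvalue of the stability matrix A(ĉ) has negative real part; that is, no instability occurs for any value of the drift parameter ĉ. -/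
private lemma stab_aux (P R k y w : ℝ) (hP : 0 ≤ P) (hR : 0 ≤ R)
    (key1 : P * (R ^ 2 + y ^ 2) = k * R) (key2 : R * (P ^ 2 + w ^ 2) = k * P)
    (hcase : (0 < P ∧ 0 < R ∧ k ≤ 0) ∨ (0 < P ∧ k < 0) ∨ (0 < R ∧ k < 0)) : False := by
  rcases hcase with ⟨hP', hR', hk⟩ | ⟨hP', hk⟩ | ⟨hR', hk⟩
  · have hpos : 0 < R ^ 2 + y ^ 2 := by nlinarith [pow_pos hR' 2, sq_nonneg y]
    have hlhs : 0 < P * (R ^ 2 + y ^ 2) := mul_pos hP' hpos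
    have hrhs : k * R ≤ 0 := mul_nonpos_of_nonpos_of_nonneg hk hR'.le
    linarith
  · have hrhs : k * P < 0 := mul_neg_of_neg_of_pos hk hP'
    have hlhs : 0 ≤ R * (P ^ 2 + w ^ 2) := mul_nonneg hR (by positivity)
    linarith
  · have hrhs : k * R < 0 := mul_neg_of_neg_of_pos hk hR'
    have hlhs : 0 ≤ P * (R ^ 2 + y ^ 2) := mul_nonneg hP (by positivity)
    linarith

/-- under the sign restrictions (3.25) of the paper (with at least three of the
four inequalities strict) no instability occurs, whatever the drift parameter `ĉ`. -/
theorem no_instability_under_sign_restrictions (a11 a12 a21 a22 μ δ χ : ℝ)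
    (h11 : a11 ≤ 0) (h22 : a22 ≤ 0) (h21 : a21 ≤ 0) (h12 : 0 ≤ a12)
    (hstrict :
      (a11 < 0 ∧ a22 < 0 ∧ a21 < 0) ∨ (a11 < 0 ∧ a22 < 0 ∧ 0 < a12) ∨
      (a11 < 0 ∧ a21 < 0 ∧ 0 < a12) ∨ (a22 < 0 ∧ a21 < 0 ∧ 0 < a12))
    (hμ : 0 ≤ μ) (hδ : 0 ≤ δ) (hχ : 0 ≤ χ) :
    ∀ c : ℝ,
      0 < μ + δ - a11 - a22 ∧
      0 < (c ^ 2 + (μ + δ - a11 - a22) ^ 2) * ((δ - a22) * (μ - a11))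
            - a21 * (μ + δ - a11 - a22) ^ 2 * (a12 + χ) ∧
      ∀ lam : ℂ, IsEigenvalue (stabMatrix a11 a12 a21 a22 μ δ χ c) lam → lam.re < 0 := by
  intro c
  have hΔ2 : 0 < μ + δ - a11 - a22 := by
    rcases hstrict with ⟨h1, h2, h3⟩ | ⟨h1, h2, h3⟩ | ⟨h1, h2, h3⟩ | ⟨h1, h2, h3⟩ <;> linarith
  refine ⟨hΔ2, ?_, ?_⟩
  · have hsq : 0 < (μ + δ - a11 - a22) ^ 2 := by positivity
    have hc2 : 0 < c ^ 2 + (μ + δ - a11 - a22) ^ 2 := by positivity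
    rcases hstrict with ⟨h1, h2, h3⟩ | ⟨h1, h2, h3⟩ | ⟨h1, h2, h3⟩ | ⟨h1, h2, h3⟩
    · nlinarith [mul_pos hc2 (mul_pos (by linarith : (0:ℝ) < δ - a22) (by linarith : (0:ℝ) < μ - a11)),
        mul_nonneg (mul_nonneg (neg_nonneg.mpr h21) hsq.le) (by linarith : (0:ℝ) ≤ a12 + χ)]
    · nlinarith [mul_pos hc2 (mul_pos (by linarith : (0:ℝ) < δ - a22) (by linarith : (0:ℝ) < μ - a11)),
        mul_nonneg (mul_nonneg (neg_nonneg.mpr h21) hsq.le) (by linarith : (0:ℝ) ≤ a12 + χ)]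
    · nlinarith [mul_nonneg hc2.le (mul_nonneg (by linarith : (0:ℝ) ≤ δ - a22) (by linarith : (0:ℝ) ≤ μ - a11)),
        mul_pos (mul_pos (by linarith : (0:ℝ) < -a21) hsq) (by linarith : (0:ℝ) < a12 + χ)]
    · nlinarith [mul_nonneg hc2.le (mul_nonneg (by linarith : (0:ℝ) ≤ δ - a22) (by linarith : (0:ℝ) ≤ μ - a11)),
        mul_pos (mul_pos (by linarith : (0:ℝ) < -a21) hsq) (by linarith : (0:ℝ) < a12 + χ)]
  · intro lam hlam
    unfold IsEigenvalue stabMatrix at hlam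
    rw [Matrix.det_fin_two] at hlam
    simp [Matrix.smul_apply, Matrix.one_apply, Complex.ext_iff] at hlam
    obtain ⟨x, y⟩ := lam
    simp only [Complex.ofReal_re] at hlam ⊢
    obtain ⟨e1, e2⟩ := hlam
    by_contra hxneg
    push_neg at hxneg
    have hP : 0 ≤ x + μ - a11 := by linarith
    have hR : 0 ≤ x + δ - a22 := by linarith
    have key1 : (x + μ - a11) * ((x + δ - a22) ^ 2 + y ^ 2)
        = (a21 * (a12 + χ)) * (x + δ - a22) := by
      linear_combination (x + δ - a22) * e1 + y * e2
    have key2 : (x + δ - a22) * ((x + μ - a11) ^ 2 + (c + y) ^ 2)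
        = (a21 * (a12 + χ)) * (x + μ - a11) := by
      linear_combination (x + μ - a11) * e1 + (c + y) * e2
    have hk0 : a21 * (a12 + χ) ≤ 0 :=
      mul_nonpos_of_nonpos_of_nonneg h21 (by linarith)
    refine stab_aux (x + μ - a11) (x + δ - a22) (a21 * (a12 + χ)) y (c + y) hP hR key1 key2 ?_
    rcases hstrict with ⟨h1, h2, h3⟩ | ⟨h1, h2, h3⟩ | ⟨h1, h2, h3⟩ | ⟨h1, h2, h3⟩
    · exact Or.inl ⟨by linarith, by linarith, hk0⟩
    · exact Or.inl ⟨by linarith, by linarith, hk0⟩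
    · exact Or.inr (Or.inl ⟨by linarith, mul_neg_of_neg_of_pos h2 (by linarith)⟩)
    · exact Or.inr (Or.inr ⟨by linarith, mul_neg_of_neg_of_pos h2 (by linarith)⟩)
end

section
/- Let f, g : ℝ × ℝ → ℝ be continuously differentiable and let h₀ : ℝ → ℝ be continuous and 2π-periodic. For a ∈ ℝ set ℰ_a(η) = exp(a·h₀(η)) and ℰ̄_a = ℰ_a/⟨ℰ_a⟩, and define F(p,s,a) = ⟨ℰ̄_a(·)·p·f(p·ℰ̄_a(·), s)⟩ and G(p,s,a) = ⟨s·g(p·ℰ̄_a(·), s)⟩, the averages being taken in η. Suppose (p_e, s_e) ∈ ℝ² satisfies p_e·f(p_e,s_e) = 0 and s_e·g(p_e,s_e) = 0, and that the determinant of the matrix [[f + p·∂_p f, p·∂_s f],[s·∂_p g, g + s·∂_s g]] evaluated at (p_e, s_e) is nonzero. Then there exist ε > 0 and continuously differentiable functions p̄_e, s̄_e : (−ε, ε) → ℝ with p̄_e(0) = p_e and s̄_e(0) = s_e such that F(p̄_e(a), s̄_e(a), a) = 0 and G(p̄_e(a), s̄_e(a), a) = 0 for all a ∈ (−ε, ε).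 (Existence of a unique smooth one-parameter family of quasi-equilibria for the PKS prey-taxis model.) -/
open MeasureTheory

/-- The average of a `2π`-periodic function. -/
noncomputable def avg (w : ℝ → ℝ) : ℝ :=
  (1 / (2 * Real.pi)) * ∫ η in (0 : ℝ)..(2 * Real.pi), w η

/-- The normalized exponential profile `ℰ̄_a = ℰ_a / ⟨ℰ_a⟩`, `ℰ_a(η) = exp (a h₀ η)`. -/
noncomputable def Ebar (h₀ : ℝ → ℝ) (a η : ℝ) : ℝ :=
  Real.exp (a * h₀ η) / avg fun η' => Real.exp (a * h₀ η')

open Metric in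
/-- C¹ dependence of a parametric interval integral, together with the formula for its
derivative. -/
lemma paramCD {E : Type*} [NormedAddCommGroup E] [NormedSpace ℝ E] [ProperSpace E]
    (T : ℝ) (Γ : E × ℝ → ℝ) (hΓ : ContDiff ℝ 1 Γ) (k : ℝ → ℝ) (hk : Continuous k) :
    (∀ x₀ : E, HasFDerivAt (fun x => ∫ η in (0:ℝ)..T, Γ (x, k η))
        (∫ η in (0:ℝ)..T, (fderiv ℝ Γ (x₀, k η)).comp (ContinuousLinearMap.inl ℝ E ℝ)) x₀) ∧
      ContDiff ℝ 1 (fun x => ∫ η in (0:ℝ)..T, Γ (x, k η)) := by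
  haveI : SecondCountableTopologyEither ℝ (E →L[ℝ] ℝ) :=
    secondCountableTopologyEither_of_left ℝ _
  have hΓc : Continuous Γ := hΓ.continuous
  have hΓd : Differentiable ℝ Γ := hΓ.differentiable one_ne_zero
  have hdc : Continuous fun z : E × ℝ => fderiv ℝ Γ z := hΓ.continuous_fderiv one_ne_zero
  set F' : E → ℝ → E →L[ℝ] ℝ :=
    fun x η => (fderiv ℝ Γ (x, k η)).comp (ContinuousLinearMap.inl ℝ E ℝ) with hF'
  have hF'c : Continuous (Function.uncurry F') := by
    show Continuous fun q : E × ℝ => F' q.1 q.2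
    apply Continuous.clm_comp
    · exact hdc.comp (continuous_fst.prodMk (hk.comp continuous_snd))
    · exact continuous_const
  have key : ∀ x₀ : E, HasFDerivAt (fun x => ∫ η in (0:ℝ)..T, Γ (x, k η))
      (∫ η in (0:ℝ)..T, F' x₀ η) x₀ := by
    intro x₀
    obtain ⟨C, hC⟩ :=
      ((isCompact_closedBall x₀ 1).prod (isCompact_uIcc (a := (0:ℝ)) (b := T))).exists_bound_of_continuousOn
        (hF'c.continuousOn)
    apply intervalIntegral.hasFDerivAt_integral_of_dominated_of_fderiv_le
      (F' := F') (bound := fun _ => C) (Metric.ball_mem_nhds x₀ one_pos)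
    · exact Filter.Eventually.of_forall fun x =>
        ((hΓc.comp ((continuous_const (y := x)).prodMk hk)).aestronglyMeasurable)
    · exact (hΓc.comp ((continuous_const (y := x₀)).prodMk hk)).intervalIntegrable _ _
    · exact (hF'c.comp ((continuous_const (y := x₀)).prodMk continuous_id)).aestronglyMeasurable
    · exact Filter.Eventually.of_forall fun η hη x hx =>
        hC (x, η) ⟨ball_subset_closedBall hx, Set.uIoc_subset_uIcc hη⟩
    · exact intervalIntegrable_const
    · refine Filter.Eventually.of_forall fun η hη x hx => ?_
      have h1 : HasFDerivAt (fun x : E => (x, k η))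
          ((ContinuousLinearMap.id ℝ E).prod 0) x :=
        (hasFDerivAt_id x).prodMk (hasFDerivAt_const (k η) x)
      have h2 := (hΓd (x, k η)).hasFDerivAt.comp x h1
      refine h2.congr_fderiv ?_
      ext v
      simp [hF']
  refine ⟨key, ?_⟩
  rw [contDiff_one_iff_fderiv]
  refine ⟨fun x₀ => (key x₀).differentiableAt, ?_⟩
  have hc := intervalIntegral.continuous_parametric_intervalIntegral_of_continuous'
    (μ := volume) hF'c 0 T
  exact hc.congr fun x => ((key x).fderiv).symm

/-- The mean of the exponential profile, as a function of the parameter `a`. -/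
noncomputable def Aa (h₀ : ℝ → ℝ) (a : ℝ) : ℝ := avg fun η' => Real.exp (a * h₀ η')

lemma Aa_pos (h₀ : ℝ → ℝ) (hh₀c : Continuous h₀) (a : ℝ) : 0 < Aa h₀ a := by
  have h2π : (0:ℝ) < 2 * Real.pi := Real.two_pi_pos
  have hint : IntervalIntegrable (fun η' => Real.exp (a * h₀ η')) volume 0 (2 * Real.pi) :=
    (Real.continuous_exp.comp (continuous_const.mul hh₀c)).intervalIntegrable _ _
  have hpos : 0 < ∫ η in (0:ℝ)..(2 * Real.pi), Real.exp (a * h₀ η) :=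
    intervalIntegral.intervalIntegral_pos_of_pos_on hint
      (fun x _ => Real.exp_pos _) h2π
  have : 0 < 1 / (2 * Real.pi) := by positivity
  exact mul_pos this hpos

lemma Aa_zero (h₀ : ℝ → ℝ) : Aa h₀ 0 = 1 := by
  have hπ : (2 * Real.pi) ≠ 0 := by positivity
  simp only [Aa, avg, zero_mul, Real.exp_zero]
  rw [intervalIntegral.integral_const]
  field_simp
  simp

lemma Aa_contDiff (h₀ : ℝ → ℝ) (hh₀c : Continuous h₀) : ContDiff ℝ 1 (Aa h₀) := by
  have h := (paramCD (2 * Real.pi) (fun q : ℝ × ℝ => Real.exp (q.1 * q.2))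
    ((contDiff_fst.mul contDiff_snd).exp) h₀ hh₀c).2
  have : Aa h₀ = fun a => (1 / (2 * Real.pi)) *
      ∫ η in (0:ℝ)..(2 * Real.pi), Real.exp (a * h₀ η) := rfl
  rw [this]
  exact contDiff_const.mul h

/-- First integrand as a `C¹` function of all variables `((a,p,s), h)`. -/
noncomputable def Gam1 (f : ℝ × ℝ → ℝ) (h₀ : ℝ → ℝ) (q : (ℝ × ℝ × ℝ) × ℝ) : ℝ :=
  (Real.exp (q.1.1 * q.2) / Aa h₀ q.1.1) *
    (q.1.2.1 * f (q.1.2.1 * (Real.exp (q.1.1 * q.2) / Aa h₀ q.1.1), q.1.2.2))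

/-- Second integrand as a `C¹` function of all variables `((a,p,s), h)`. -/
noncomputable def Gam2 (g : ℝ × ℝ → ℝ) (h₀ : ℝ → ℝ) (q : (ℝ × ℝ × ℝ) × ℝ) : ℝ :=
  q.1.2.2 * g (q.1.2.1 * (Real.exp (q.1.1 * q.2) / Aa h₀ q.1.1), q.1.2.2)

lemma EbCD (h₀ : ℝ → ℝ) (hh₀c : Continuous h₀) :
    ContDiff ℝ 1 (fun q : (ℝ × ℝ × ℝ) × ℝ => Real.exp (q.1.1 * q.2) / Aa h₀ q.1.1) := by
  refine ContDiff.div ?_ ?_ ?_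
  · exact ((contDiff_fst.fst.mul contDiff_snd)).exp
  · exact (Aa_contDiff h₀ hh₀c).comp contDiff_fst.fst
  · exact fun q => (Aa_pos h₀ hh₀c _).ne'

lemma Gam1CD (f : ℝ × ℝ → ℝ) (hf : ContDiff ℝ 1 f) (h₀ : ℝ → ℝ) (hh₀c : Continuous h₀) :
    ContDiff ℝ 1 (Gam1 f h₀) := by
  refine (EbCD h₀ hh₀c).mul (contDiff_fst.snd.fst.mul (hf.comp ?_))
  exact (contDiff_fst.snd.fst.mul (EbCD h₀ hh₀c)).prodMk contDiff_fst.snd.snd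

lemma Gam2CD (g : ℝ × ℝ → ℝ) (hg : ContDiff ℝ 1 g) (h₀ : ℝ → ℝ) (hh₀c : Continuous h₀) :
    ContDiff ℝ 1 (Gam2 g h₀) := by
  refine contDiff_fst.snd.snd.mul (hg.comp ?_)
  exact (contDiff_fst.snd.fst.mul (EbCD h₀ hh₀c)).prodMk contDiff_fst.snd.snd

/-- Compute `fderiv Γ z v` from a one-dimensional derivative along the line `t ↦ z + t • v`. -/
lemma fderiv_line {W : Type*} [NormedAddCommGroup W] [NormedSpace ℝ W]
    {Γ : W → ℝ} (hΓ : Differentiable ℝ Γ) (z v : W) {c : ℝ}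
    (h : HasDerivAt (fun t : ℝ => Γ (z + t • v)) c 0) : fderiv ℝ Γ z v = c := by
  have h1 : HasDerivAt (fun t : ℝ => z + t • v) v 0 := by
    simpa using ((hasDerivAt_id (0:ℝ)).smul_const v).const_add z
  have h2 : HasDerivAt (fun t : ℝ => Γ (z + t • v)) (fderiv ℝ Γ (z + (0:ℝ) • v) v) 0 :=
    (hΓ (z + (0:ℝ) • v)).hasFDerivAt.comp_hasDerivAt 0 h1
  simp only [zero_smul, add_zero] at h2
  exact h2.unique h

set_option maxHeartbeats 1600000 in
/-- existence of a smooth one-parameter family of quasi-equilibria for the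
PKS prey-taxis model (Lemma 1 of the paper). -/
theorem quasi_equilibria_PKS (f g : ℝ × ℝ → ℝ)
    (hf : ContDiff ℝ 1 f) (hg : ContDiff ℝ 1 g)
    (h₀ : ℝ → ℝ) (hh₀c : Continuous h₀) (hh₀per : Function.Periodic h₀ (2 * Real.pi))
    (p_e s_e : ℝ)
    (heq1 : p_e * f (p_e, s_e) = 0) (heq2 : s_e * g (p_e, s_e) = 0)
    (hdet :
      (f (p_e, s_e) + p_e * fderiv ℝ f (p_e, s_e) (1, 0)) *
          (g (p_e, s_e) + s_e * fderiv ℝ g (p_e, s_e) (0, 1)) -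
        (p_e * fderiv ℝ f (p_e, s_e) (0, 1)) *
          (s_e * fderiv ℝ g (p_e, s_e) (1, 0)) ≠ 0) :
    ∃ ε > (0 : ℝ), ∃ pbar sbar : ℝ → ℝ,
      ContDiffOn ℝ 1 pbar (Set.Ioo (-ε) ε) ∧ ContDiffOn ℝ 1 sbar (Set.Ioo (-ε) ε) ∧
      pbar 0 = p_e ∧ sbar 0 = s_e ∧
      ∀ a ∈ Set.Ioo (-ε) ε,
        avg (fun η => Ebar h₀ a η * (pbar a * f (pbar a * Ebar h₀ a η, sbar a))) = 0 ∧
        avg (fun η => sbar a * g (pbar a * Ebar h₀ a η, sbar a)) = 0 := by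
  have h2π : (2 * Real.pi) ≠ 0 := by positivity
  have hA0 : Aa h₀ 0 = 1 := Aa_zero h₀
  have hΓ1cd : ContDiff ℝ 1 (Gam1 f h₀) := Gam1CD f hf h₀ hh₀c
  have hΓ2cd : ContDiff ℝ 1 (Gam2 g h₀) := Gam2CD g hg h₀ hh₀c
  have hΓ1d : Differentiable ℝ (Gam1 f h₀) := hΓ1cd.differentiable one_ne_zero
  have hΓ2d : Differentiable ℝ (Gam2 g h₀) := hΓ2cd.differentiable one_ne_zero
  have hfd : Differentiable ℝ f := hf.differentiable one_ne_zero
  have hgd : Differentiable ℝ g := hg.differentiable one_ne_zero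
  set M11 := f (p_e, s_e) + p_e * fderiv ℝ f (p_e, s_e) (1, 0) with hM11
  set M12 := p_e * fderiv ℝ f (p_e, s_e) (0, 1) with hM12
  set M21 := s_e * fderiv ℝ g (p_e, s_e) (1, 0) with hM21
  set M22 := g (p_e, s_e) + s_e * fderiv ℝ g (p_e, s_e) (0, 1) with hM22
  -- one-dimensional auxiliary derivatives
  have hcp : HasDerivAt (fun t : ℝ => ((p_e + t : ℝ), s_e)) ((1:ℝ), (0:ℝ)) 0 :=
    ((hasDerivAt_id (0:ℝ)).const_add p_e).prodMk (hasDerivAt_const 0 s_e)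
  have hcs : HasDerivAt (fun t : ℝ => ((p_e : ℝ), s_e + t)) ((0:ℝ), (1:ℝ)) 0 :=
    (hasDerivAt_const 0 p_e).prodMk ((hasDerivAt_id (0:ℝ)).const_add s_e)
  have hfp : HasDerivAt (fun t : ℝ => f (p_e + t, s_e)) (fderiv ℝ f (p_e, s_e) (1, 0)) 0 := by
    have h2 := (hfd (p_e + (0:ℝ), s_e)).hasFDerivAt.comp_hasDerivAt 0 hcp
    simpa [Function.comp_def] using h2
  have hfs : HasDerivAt (fun t : ℝ => f (p_e, s_e + t)) (fderiv ℝ f (p_e, s_e) (0, 1)) 0 := by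
    have h2 := (hfd (p_e, s_e + (0:ℝ))).hasFDerivAt.comp_hasDerivAt 0 hcs
    simpa [Function.comp_def] using h2
  have hgp : HasDerivAt (fun t : ℝ => g (p_e + t, s_e)) (fderiv ℝ g (p_e, s_e) (1, 0)) 0 := by
    have h2 := (hgd (p_e + (0:ℝ), s_e)).hasFDerivAt.comp_hasDerivAt 0 hcp
    simpa [Function.comp_def] using h2
  have hgs : HasDerivAt (fun t : ℝ => g (p_e, s_e + t)) (fderiv ℝ g (p_e, s_e) (0, 1)) 0 := by
    have h2 := (hgd (p_e, s_e + (0:ℝ))).hasFDerivAt.comp_hasDerivAt 0 hcs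
    simpa [Function.comp_def] using h2
  -- pointwise partial derivatives of the integrands at the base point
  have hm11 : ∀ h : ℝ, fderiv ℝ (Gam1 f h₀) ((((0:ℝ), p_e, s_e) : ℝ × ℝ × ℝ), h)
      ((((0:ℝ), (1:ℝ), (0:ℝ)) : ℝ × ℝ × ℝ), (0:ℝ)) = M11 := by
    intro h
    apply fderiv_line hΓ1d
    have hline : (fun t : ℝ => Gam1 f h₀
        (((((0:ℝ), p_e, s_e) : ℝ × ℝ × ℝ), h) + t • ((((0:ℝ), (1:ℝ), (0:ℝ)) : ℝ × ℝ × ℝ), (0:ℝ))))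
        = fun t : ℝ => (p_e + t) * f (p_e + t, s_e) := by
      funext t
      simp [Gam1, hA0, Prod.mk_add_mk, Prod.smul_mk]
    rw [hline, hM11]
    have hd := ((hasDerivAt_id (0:ℝ)).const_add p_e).mul hfp
    simpa [Pi.mul_def] using hd
  have hm12 : ∀ h : ℝ, fderiv ℝ (Gam1 f h₀) ((((0:ℝ), p_e, s_e) : ℝ × ℝ × ℝ), h)
      ((((0:ℝ), (0:ℝ), (1:ℝ)) : ℝ × ℝ × ℝ), (0:ℝ)) = M12 := by
    intro h
    apply fderiv_line hΓ1d
    have hline : (fun t : ℝ => Gam1 f h₀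
        (((((0:ℝ), p_e, s_e) : ℝ × ℝ × ℝ), h) + t • ((((0:ℝ), (0:ℝ), (1:ℝ)) : ℝ × ℝ × ℝ), (0:ℝ))))
        = fun t : ℝ => p_e * f (p_e, s_e + t) := by
      funext t
      simp [Gam1, hA0, Prod.mk_add_mk, Prod.smul_mk]
    rw [hline, hM12]
    exact hfs.const_mul p_e
  have hm21 : ∀ h : ℝ, fderiv ℝ (Gam2 g h₀) ((((0:ℝ), p_e, s_e) : ℝ × ℝ × ℝ), h)
      ((((0:ℝ), (1:ℝ), (0:ℝ)) : ℝ × ℝ × ℝ), (0:ℝ)) = M21 := by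
    intro h
    apply fderiv_line hΓ2d
    have hline : (fun t : ℝ => Gam2 g h₀
        (((((0:ℝ), p_e, s_e) : ℝ × ℝ × ℝ), h) + t • ((((0:ℝ), (1:ℝ), (0:ℝ)) : ℝ × ℝ × ℝ), (0:ℝ))))
        = fun t : ℝ => s_e * g (p_e + t, s_e) := by
      funext t
      simp [Gam2, hA0, Prod.mk_add_mk, Prod.smul_mk]
    rw [hline, hM21]
    exact hgp.const_mul s_e
  have hm22 : ∀ h : ℝ, fderiv ℝ (Gam2 g h₀) ((((0:ℝ), p_e, s_e) : ℝ × ℝ × ℝ), h)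
      ((((0:ℝ), (0:ℝ), (1:ℝ)) : ℝ × ℝ × ℝ), (0:ℝ)) = M22 := by
    intro h
    apply fderiv_line hΓ2d
    have hline : (fun t : ℝ => Gam2 g h₀
        (((((0:ℝ), p_e, s_e) : ℝ × ℝ × ℝ), h) + t • ((((0:ℝ), (0:ℝ), (1:ℝ)) : ℝ × ℝ × ℝ), (0:ℝ))))
        = fun t : ℝ => (s_e + t) * g (p_e, s_e + t) := by
      funext t
      simp [Gam2, hA0, Prod.mk_add_mk, Prod.smul_mk]
    rw [hline, hM22]
    have hd := ((hasDerivAt_id (0:ℝ)).const_add s_e).mul hgs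
    simpa [Pi.mul_def] using hd
  -- evaluating the integral of the derivative on directions
  have happly : ∀ (Γ : (ℝ × ℝ × ℝ) × ℝ → ℝ), ContDiff ℝ 1 Γ → ∀ (v : ℝ × ℝ × ℝ) (c : ℝ),
      (∀ h : ℝ, fderiv ℝ Γ ((((0:ℝ), p_e, s_e) : ℝ × ℝ × ℝ), h) (v, (0:ℝ)) = c) →
      (∫ η in (0:ℝ)..(2 * Real.pi),
          (fderiv ℝ Γ ((((0:ℝ), p_e, s_e) : ℝ × ℝ × ℝ), h₀ η)).comp
            (ContinuousLinearMap.inl ℝ (ℝ × ℝ × ℝ) ℝ)) v = (2 * Real.pi) * c := by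
    intro Γ hΓ v c hc
    have hcont : Continuous fun η => (fderiv ℝ Γ ((((0:ℝ), p_e, s_e) : ℝ × ℝ × ℝ), h₀ η)).comp
        (ContinuousLinearMap.inl ℝ (ℝ × ℝ × ℝ) ℝ) :=
      Continuous.clm_comp ((hΓ.continuous_fderiv one_ne_zero).comp
        (continuous_const.prodMk hh₀c)) continuous_const
    rw [ContinuousLinearMap.intervalIntegral_apply (hcont.intervalIntegrable _ _) v]
    have heq : (fun η => ((fderiv ℝ Γ ((((0:ℝ), p_e, s_e) : ℝ × ℝ × ℝ), h₀ η)).comp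
        (ContinuousLinearMap.inl ℝ (ℝ × ℝ × ℝ) ℝ)) v) = fun _ => c := by
      funext η
      simpa using hc (h₀ η)
    rw [heq, intervalIntegral.integral_const, smul_eq_mul, sub_zero]
  -- the map Ψ and its derivative
  set Ψ : ℝ × ℝ × ℝ → ℝ × ℝ × ℝ := fun x =>
    (x.1, (1 / (2 * Real.pi)) * ∫ η in (0:ℝ)..(2 * Real.pi), Gam1 f h₀ (x, h₀ η),
      (1 / (2 * Real.pi)) * ∫ η in (0:ℝ)..(2 * Real.pi), Gam2 g h₀ (x, h₀ η)) with hΨdef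
  have hΨcd : ContDiff ℝ 1 Ψ := by
    rw [hΨdef]
    exact contDiff_fst.prodMk
      ((contDiff_const.mul (paramCD (2 * Real.pi) (Gam1 f h₀) hΓ1cd h₀ hh₀c).2).prodMk
        (contDiff_const.mul (paramCD (2 * Real.pi) (Gam2 g h₀) hΓ2cd h₀ hh₀c).2))
  set L1 : (ℝ × ℝ × ℝ) →L[ℝ] ℝ := ∫ η in (0:ℝ)..(2 * Real.pi),
    (fderiv ℝ (Gam1 f h₀) ((((0:ℝ), p_e, s_e) : ℝ × ℝ × ℝ), h₀ η)).comp
      (ContinuousLinearMap.inl ℝ (ℝ × ℝ × ℝ) ℝ) with hL1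
  set L2 : (ℝ × ℝ × ℝ) →L[ℝ] ℝ := ∫ η in (0:ℝ)..(2 * Real.pi),
    (fderiv ℝ (Gam2 g h₀) ((((0:ℝ), p_e, s_e) : ℝ × ℝ × ℝ), h₀ η)).comp
      (ContinuousLinearMap.inl ℝ (ℝ × ℝ × ℝ) ℝ) with hL2
  set DΨ : (ℝ × ℝ × ℝ) →L[ℝ] ℝ × ℝ × ℝ :=
    (ContinuousLinearMap.fst ℝ ℝ (ℝ × ℝ)).prod
      (((1 / (2 * Real.pi)) • L1).prod ((1 / (2 * Real.pi)) • L2)) with hDΨ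
  have hΨd : HasFDerivAt Ψ DΨ (((0:ℝ), p_e, s_e) : ℝ × ℝ × ℝ) := by
    rw [hΨdef, hDΨ, hL1, hL2]
    exact (hasFDerivAt_fst).prodMk
      ((((paramCD (2 * Real.pi) (Gam1 f h₀) hΓ1cd h₀ hh₀c).1 _).const_mul _).prodMk
        (((paramCD (2 * Real.pi) (Gam2 g h₀) hΓ2cd h₀ hh₀c).1 _).const_mul _))
  have hL1e2 : L1 (((0:ℝ), (1:ℝ), (0:ℝ)) : ℝ × ℝ × ℝ) = (2 * Real.pi) * M11 := by
    rw [hL1]; exact happly (Gam1 f h₀) hΓ1cd _ _ hm11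
  have hL1e3 : L1 (((0:ℝ), (0:ℝ), (1:ℝ)) : ℝ × ℝ × ℝ) = (2 * Real.pi) * M12 := by
    rw [hL1]; exact happly (Gam1 f h₀) hΓ1cd _ _ hm12
  have hL2e2 : L2 (((0:ℝ), (1:ℝ), (0:ℝ)) : ℝ × ℝ × ℝ) = (2 * Real.pi) * M21 := by
    rw [hL2]; exact happly (Gam2 g h₀) hΓ2cd _ _ hm21
  have hL2e3 : L2 (((0:ℝ), (0:ℝ), (1:ℝ)) : ℝ × ℝ × ℝ) = (2 * Real.pi) * M22 := by
    rw [hL2]; exact happly (Gam2 g h₀) hΓ2cd _ _ hm22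
  -- injectivity of the derivative
  have hDinj : Function.Injective DΨ := by
    rw [injective_iff_map_eq_zero]
    rintro ⟨v1, vp, vs⟩ hv
    have hv' : v1 = 0 ∧ (1 / (2 * Real.pi)) * L1 (v1, vp, vs) = 0 ∧
        (1 / (2 * Real.pi)) * L2 (v1, vp, vs) = 0 := by
      simpa [hDΨ, Prod.ext_iff] using hv
    obtain ⟨h1, h2, h3⟩ := hv'
    have hdecomp : ((v1, vp, vs) : ℝ × ℝ × ℝ) =
        vp • (((0:ℝ), (1:ℝ), (0:ℝ)) : ℝ × ℝ × ℝ) + vs • (((0:ℝ), (0:ℝ), (1:ℝ)) : ℝ × ℝ × ℝ) := by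
      simp [Prod.ext_iff, h1]
    have hL1v : L1 (v1, vp, vs) = vp * ((2 * Real.pi) * M11) + vs * ((2 * Real.pi) * M12) := by
      rw [hdecomp, map_add, _root_.map_smul, _root_.map_smul, hL1e2, hL1e3, smul_eq_mul, smul_eq_mul]
    have hL2v : L2 (v1, vp, vs) = vp * ((2 * Real.pi) * M21) + vs * ((2 * Real.pi) * M22) := by
      rw [hdecomp, map_add, _root_.map_smul, _root_.map_smul, hL2e2, hL2e3, smul_eq_mul, smul_eq_mul]
    have hc : (1 / (2 * Real.pi)) ≠ 0 := by positivity
    have hz1 : L1 (v1, vp, vs) = 0 := by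
      rcases mul_eq_zero.mp h2 with h | h
      · exact absurd h hc
      · exact h
    have hz2 : L2 (v1, vp, vs) = 0 := by
      rcases mul_eq_zero.mp h3 with h | h
      · exact absurd h hc
      · exact h
    rw [hL1v] at hz1
    rw [hL2v] at hz2
    have key1 : vp * M11 + vs * M12 = 0 := by
      have h2π' : (2 * Real.pi) * (vp * M11 + vs * M12) = 0 := by linear_combination hz1
      rcases mul_eq_zero.mp h2π' with h | h
      · exact absurd h h2π
      · exact h
    have key2 : vp * M21 + vs * M22 = 0 := by
      have h2π' : (2 * Real.pi) * (vp * M21 + vs * M22) = 0 := by linear_combination hz2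
      rcases mul_eq_zero.mp h2π' with h | h
      · exact absurd h h2π
      · exact h
    have hvp : vp * (M11 * M22 - M12 * M21) = 0 := by
      linear_combination M22 * key1 - M12 * key2
    have hvs : vs * (M11 * M22 - M12 * M21) = 0 := by
      linear_combination M11 * key2 - M21 * key1
    have hvp0 : vp = 0 := by
      rcases mul_eq_zero.mp hvp with h | h
      · exact h
      · exact absurd h hdet
    have hvs0 : vs = 0 := by
      rcases mul_eq_zero.mp hvs with h | h
      · exact h
      · exact absurd h hdet
    simp [Prod.ext_iff, h1, hvp0, hvs0]
  have hDsurj : Function.Surjective DΨ :=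
    (LinearMap.injective_iff_surjective (f := (DΨ : (ℝ × ℝ × ℝ) →ₗ[ℝ] ℝ × ℝ × ℝ))).mp hDinj
  set eqv : (ℝ × ℝ × ℝ) ≃L[ℝ] ℝ × ℝ × ℝ :=
    (LinearEquiv.ofBijective (DΨ : (ℝ × ℝ × ℝ) →ₗ[ℝ] ℝ × ℝ × ℝ)
      ⟨hDinj, hDsurj⟩).toContinuousLinearEquiv with heqvdef
  have heqv : (eqv : (ℝ × ℝ × ℝ) →L[ℝ] ℝ × ℝ × ℝ) = DΨ := by
    refine ContinuousLinearMap.ext fun v => ?_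
    rfl
  have hΨd' : HasFDerivAt Ψ (eqv : (ℝ × ℝ × ℝ) →L[ℝ] ℝ × ℝ × ℝ) (((0:ℝ), p_e, s_e) : ℝ × ℝ × ℝ) :=
    hΨd.congr_fderiv heqv.symm
  have hΨat : ContDiffAt ℝ 1 Ψ (((0:ℝ), p_e, s_e) : ℝ × ℝ × ℝ) := hΨcd.contDiffAt
  have hstrict : HasStrictFDerivAt Ψ (eqv : (ℝ × ℝ × ℝ) →L[ℝ] ℝ × ℝ × ℝ)
      (((0:ℝ), p_e, s_e) : ℝ × ℝ × ℝ) := hΨat.hasStrictFDerivAt' hΨd' one_ne_zero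
  set φ : ℝ × ℝ × ℝ → ℝ × ℝ × ℝ := hstrict.localInverse Ψ eqv _ with hφdef
  have hφcd : ContDiffAt ℝ 1 φ (Ψ (((0:ℝ), p_e, s_e) : ℝ × ℝ × ℝ)) :=
    hΨat.to_localInverse hΨd' one_ne_zero
  have hright : ∀ᶠ y in nhds (Ψ (((0:ℝ), p_e, s_e) : ℝ × ℝ × ℝ)), Ψ (φ y) = y :=
    hstrict.eventually_right_inverse
  have hφ0 : φ (Ψ (((0:ℝ), p_e, s_e) : ℝ × ℝ × ℝ)) = (((0:ℝ), p_e, s_e) : ℝ × ℝ × ℝ) :=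
    hstrict.localInverse_apply_image
  -- value of Ψ at the base point
  have hI10 : (fun η => Gam1 f h₀ ((((0:ℝ), p_e, s_e) : ℝ × ℝ × ℝ), h₀ η)) = fun _ => (0:ℝ) := by
    funext η
    simp [Gam1, hA0]
    simpa using heq1
  have hI20 : (fun η => Gam2 g h₀ ((((0:ℝ), p_e, s_e) : ℝ × ℝ × ℝ), h₀ η)) = fun _ => (0:ℝ) := by
    funext η
    simp [Gam2, hA0]
    simpa using heq2
  have hΨx₀ : Ψ (((0:ℝ), p_e, s_e) : ℝ × ℝ × ℝ) = (((0:ℝ), (0:ℝ), (0:ℝ)) : ℝ × ℝ × ℝ) := by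
    rw [hΨdef]
    simp only
    rw [hI10, hI20]
    simp
  set ι : ℝ → ℝ × ℝ × ℝ := fun a => ((a : ℝ), (0:ℝ), (0:ℝ)) with hιdef
  have hιc : Continuous ι := by
    rw [hιdef]; exact continuous_id.prodMk continuous_const
  have hev1 : ∀ᶠ a in nhds (0:ℝ), Ψ (φ (ι a)) = ι a := by
    have ht : Filter.Tendsto ι (nhds 0) (nhds (Ψ (((0:ℝ), p_e, s_e) : ℝ × ℝ × ℝ))) := by
      rw [hΨx₀]
      exact hιc.continuousAt
    exact ht.eventually hright
  have hφι : ContDiffAt ℝ 1 (fun a => φ (ι a)) 0 := by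
    have h1 : ContDiffAt ℝ 1 φ (ι 0) := by
      have h2 := hφcd
      rw [hΨx₀] at h2
      exact h2
    have hιcd : ContDiff ℝ 1 ι := by
      rw [hιdef]; exact contDiff_id.prodMk contDiff_const
    exact h1.comp 0 hιcd.contDiffAt
  have hpcd : ContDiffAt ℝ 1 (fun a => (φ (ι a)).2.1) 0 :=
    (contDiff_fst.comp contDiff_snd).contDiffAt.comp 0 hφι
  have hscd : ContDiffAt ℝ 1 (fun a => (φ (ι a)).2.2) 0 :=
    (contDiff_snd.comp contDiff_snd).contDiffAt.comp 0 hφι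
  obtain ⟨u₁, hu₁, hpOn⟩ := hpcd.contDiffOn le_rfl (by simp)
  obtain ⟨u₂, hu₂, hsOn⟩ := hscd.contDiffOn le_rfl (by simp)
  have hmem : (u₁ ∩ u₂ ∩ {a : ℝ | Ψ (φ (ι a)) = ι a}) ∈ nhds (0:ℝ) :=
    Filter.inter_mem (Filter.inter_mem hu₁ hu₂) hev1
  obtain ⟨ε, hε, hball⟩ := Metric.mem_nhds_iff.mp hmem
  have hIoo : Set.Ioo (-ε) ε ⊆ u₁ ∩ u₂ ∩ {a : ℝ | Ψ (φ (ι a)) = ι a} := by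
    refine subset_trans ?_ hball
    intro a ha
    rw [Real.ball_eq_Ioo]
    simpa using ha
  refine ⟨ε, hε, fun a => (φ (ι a)).2.1, fun a => (φ (ι a)).2.2, ?_, ?_, ?_, ?_, ?_⟩
  · exact hpOn.mono fun a ha => ((hIoo ha).1).1
  · exact hsOn.mono fun a ha => ((hIoo ha).1).2
  · show (φ (ι 0)).2.1 = p_e
    have h1 : φ (ι 0) = (((0:ℝ), p_e, s_e) : ℝ × ℝ × ℝ) := by
      rw [show ι 0 = Ψ (((0:ℝ), p_e, s_e) : ℝ × ℝ × ℝ) from hΨx₀.symm]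
      exact hφ0
    rw [h1]
  · show (φ (ι 0)).2.2 = s_e
    have h1 : φ (ι 0) = (((0:ℝ), p_e, s_e) : ℝ × ℝ × ℝ) := by
      rw [show ι 0 = Ψ (((0:ℝ), p_e, s_e) : ℝ × ℝ × ℝ) from hΨx₀.symm]
      exact hφ0
    rw [h1]
  · intro a ha
    have h3 : Ψ (φ (ι a)) = ι a := (hIoo ha).2
    simp only [hΨdef, hιdef, Prod.ext_iff] at h3
    have hy1 : (φ (ι a)).1 = a := h3.1
    have hy2 := h3.2.1
    have hy3 := h3.2.2
    have hxy : ((a, (φ (ι a)).2.1, (φ (ι a)).2.2) : ℝ × ℝ × ℝ) = φ (ι a) := by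
      have heta : (((φ (ι a)).1, (φ (ι a)).2.1, (φ (ι a)).2.2) : ℝ × ℝ × ℝ) = φ (ι a) := by
        simp
      rw [← heta, hy1]
    constructor
    · calc avg (fun η => Ebar h₀ a η * ((φ (ι a)).2.1 *
            f ((φ (ι a)).2.1 * Ebar h₀ a η, (φ (ι a)).2.2)))
          = (1 / (2 * Real.pi)) * ∫ η in (0:ℝ)..(2 * Real.pi),
              Gam1 f h₀ (((a, (φ (ι a)).2.1, (φ (ι a)).2.2) : ℝ × ℝ × ℝ), h₀ η) := rfl
        _ = (1 / (2 * Real.pi)) * ∫ η in (0:ℝ)..(2 * Real.pi),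
              Gam1 f h₀ (φ (ι a), h₀ η) := by rw [hxy]
        _ = 0 := hy2
    · calc avg (fun η => (φ (ι a)).2.2 * g ((φ (ι a)).2.1 * Ebar h₀ a η, (φ (ι a)).2.2))
          = (1 / (2 * Real.pi)) * ∫ η in (0:ℝ)..(2 * Real.pi),
              Gam2 g h₀ (((a, (φ (ι a)).2.1, (φ (ι a)).2.2) : ℝ × ℝ × ℝ), h₀ η) := rfl
        _ = (1 / (2 * Real.pi)) * ∫ η in (0:ℝ)..(2 * Real.pi),
              Gam2 g h₀ (φ (ι a), h₀ η) := by rw [hxy]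
        _ = 0 := hy3
end

section
/- Let w : ℝ → ℝ be continuous and 2π-periodic. For b > 0 define (b·R_b w)(η) := b·∫₀^∞ e^{−bξ} w(η − ξ) dξ. Then for every η ∈ ℝ, (b·R_b w)(η) → ⟨w⟩ as b → 0⁺. -/
open MeasureTheory Filter

open Set in
/-- A continuous `2π`-periodic function is bounded. -/
lemma bdd_of_periodic (f : ℝ → ℝ) (hf : Continuous f)
    (hp : Function.Periodic f (2 * Real.pi)) : ∃ C, 0 ≤ C ∧ ∀ x, |f x| ≤ C := by
  obtain ⟨C, hC⟩ :=
    (isCompact_Icc (a := (0:ℝ)) (b := 2 * Real.pi)).exists_bound_of_continuousOn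
      hf.continuousOn
  refine ⟨max C 0, le_max_right _ _, fun x => ?_⟩
  obtain ⟨y, hy, hxy⟩ := hp.exists_mem_Ico₀ Real.two_pi_pos x
  rw [hxy]
  calc |f y| ≤ C := by simpa [Real.norm_eq_abs] using hC y ⟨hy.1, hy.2.le⟩
    _ ≤ max C 0 := le_max_left _ _

open Set in
/-- `(b R_b w)(η) → ⟨w⟩` as `b → 0⁺`, for `w` continuous and `2π`-periodic. -/
theorem bRb_tendsto_average (w : ℝ → ℝ)
    (hc : Continuous w) (hper : Function.Periodic w (2 * Real.pi)) (η : ℝ) :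
    Tendsto (fun b : ℝ => b * ∫ ξ in Set.Ioi (0 : ℝ), Real.exp (-b * ξ) * w (η - ξ))
      (nhdsWithin 0 (Set.Ioi 0)) (nhds (avg w)) := by
  set A := avg w with hA
  set v : ℝ → ℝ := fun ξ => w (η - ξ) - A with hv
  have hvc : Continuous v := (hc.comp (continuous_const.sub continuous_id)).sub continuous_const
  have hvper : Function.Periodic v (2 * Real.pi) := by
    intro x
    have : η - (x + 2 * Real.pi) = (η - x) - 2 * Real.pi := by ring
    simp only [hv, this, hper.sub_eq (η - x)]
  -- the integral of v over one period is zero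
  have hv0 : ∫ t in (0:ℝ)..(2 * Real.pi), v t = 0 := by
    have h1 : ∫ t in (0:ℝ)..(2 * Real.pi), w (η - t)
        = ∫ t in (η - 2 * Real.pi)..(η - 0), w t :=
      intervalIntegral.integral_comp_sub_left w η
    have h2 : ∫ t in (η - 2 * Real.pi)..(η - 2 * Real.pi) + 2 * Real.pi, w t
        = ∫ t in (0:ℝ)..0 + 2 * Real.pi, w t := hper.intervalIntegral_add_eq _ _
    have h3 : (η - 2 * Real.pi) + 2 * Real.pi = η - 0 := by ring
    have h4 : ∫ t in (0:ℝ)..(2 * Real.pi), w (η - t)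
        = ∫ t in (0:ℝ)..(2 * Real.pi), w t := by
      rw [h1, ← h3, h2, zero_add]
    have hw : IntervalIntegrable (fun t => w (η - t)) volume 0 (2 * Real.pi) :=
      (hc.comp (continuous_const.sub continuous_id)).intervalIntegrable _ _
    rw [show v = fun t => w (η - t) - A from rfl]
    rw [intervalIntegral.integral_sub hw (intervalIntegrable_const), h4,
      intervalIntegral.integral_const]
    have hπ : (2 * Real.pi) ≠ 0 := ne_of_gt Real.two_pi_pos
    rw [hA]
    simp only [avg, smul_eq_mul, sub_zero]
    field_simp
    ring
  -- the antiderivative of v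
  set W : ℝ → ℝ := fun x => ∫ t in (0:ℝ)..x, v t with hW
  have hWd : ∀ x, HasDerivAt W (v x) x := fun x =>
    intervalIntegral.integral_hasDerivAt_right (hvc.intervalIntegrable _ _)
      (hvc.stronglyMeasurableAtFilter _ _) hvc.continuousAt
  have hWc : Continuous W := by
    rw [continuous_iff_continuousAt]; exact fun x => (hWd x).continuousAt
  have hWper : Function.Periodic W (2 * Real.pi) := by
    intro x
    have hadd : (∫ t in (0:ℝ)..x, v t) + (∫ t in x..(x + 2 * Real.pi), v t)
        = ∫ t in (0:ℝ)..(x + 2 * Real.pi), v t :=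
      intervalIntegral.integral_add_adjacent_intervals (hvc.intervalIntegrable _ _)
        (hvc.intervalIntegrable _ _)
    have hmid : ∫ t in x..(x + 2 * Real.pi), v t = 0 := by
      have := hvper.intervalIntegral_add_eq x 0
      rw [this, zero_add, hv0]
    simp only [hW, ← hadd, hmid, add_zero]
  have hW0 : W 0 = 0 := by simp [hW]
  obtain ⟨M, hM0, hM⟩ := bdd_of_periodic W hWc hWper
  -- main estimate for fixed b > 0
  have key : ∀ b : ℝ, b ∈ Ioi (0:ℝ) →
      |b * (∫ ξ in Set.Ioi (0 : ℝ), Real.exp (-b * ξ) * w (η - ξ)) - A| ≤ M * b := by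
    intro b hb
    rw [mem_Ioi] at hb
    have hexp_int : IntegrableOn (fun ξ => Real.exp (-b * ξ)) (Ioi (0:ℝ)) :=
      exp_neg_integrableOn_Ioi 0 hb
    have hexp_cont : Continuous (fun ξ : ℝ => Real.exp (-b * ξ)) :=
      Real.continuous_exp.comp (continuous_const.mul continuous_id)
    -- ∫ exp(-b ξ) = 1/b
    have hexp_val : ∫ ξ in Ioi (0:ℝ), Real.exp (-b * ξ) = 1 / b := by
      have hder : ∀ x ∈ Ici (0:ℝ),
          HasDerivAt (fun ξ => -Real.exp (-b * ξ) / b) (Real.exp (-b * x)) x := by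
        intro x _
        have h1 : HasDerivAt (fun ξ : ℝ => -b * ξ) (-b) x := by
          simpa using (hasDerivAt_id x).const_mul (-b)
        have h2 := h1.exp
        have h3 := (h2.neg).div_const b
        exact h3.congr_deriv (by field_simp)
      have htend : Tendsto (fun ξ => -Real.exp (-b * ξ) / b) atTop (nhds 0) := by
        have h1 : Tendsto (fun ξ : ℝ => -b * ξ) atTop atBot :=
          tendsto_id.const_mul_atTop_of_neg (neg_neg_iff_pos.mpr hb)
        have h2 := (Real.tendsto_exp_atBot.comp h1).neg.div_const b
        simpa using h2
      rw [integral_Ioi_of_hasDerivAt_of_tendsto' hder hexp_int htend]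
      simp [Real.exp_zero]
      ring
    -- integrability of exp * v and exp * W
    obtain ⟨Cv, _, hCv⟩ := bdd_of_periodic v hvc hvper
    have hmono : ∀ (u : ℝ → ℝ) (Cu : ℝ), Continuous u → (∀ x, |u x| ≤ Cu) →
        IntegrableOn (fun ξ => Real.exp (-b * ξ) * u ξ) (Ioi (0:ℝ)) := by
      intro u Cu hu hCu
      refine Integrable.mono' (g := fun ξ => Cu * Real.exp (-b * ξ))
        (hexp_int.const_mul Cu) ((hexp_cont.mul hu).aestronglyMeasurable) ?_
      filter_upwards with x
      rw [Real.norm_eq_abs, abs_mul, abs_of_pos (Real.exp_pos _)]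
      calc Real.exp (-b * x) * |u x| ≤ Real.exp (-b * x) * Cu :=
            mul_le_mul_of_nonneg_left (hCu x) (Real.exp_pos _).le
        _ = Cu * Real.exp (-b * x) := mul_comm _ _
    have hIv := hmono v Cv hvc hCv
    have hIW := hmono W M hWc hM
    -- integration by parts: ∫ exp(-bξ) v = b ∫ exp(-bξ) W
    have hibp : ∫ ξ in Ioi (0:ℝ), Real.exp (-b * ξ) * v ξ
        = b * ∫ ξ in Ioi (0:ℝ), Real.exp (-b * ξ) * W ξ := by
      have hFd : ∀ x ∈ Ici (0:ℝ), HasDerivAt (fun ξ => Real.exp (-b * ξ) * W ξ)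
          (Real.exp (-b * x) * v x - b * (Real.exp (-b * x) * W x)) x := by
        intro x _
        have h1 : HasDerivAt (fun ξ : ℝ => -b * ξ) (-b) x := by
          simpa using (hasDerivAt_id x).const_mul (-b)
        have h2 := h1.exp.mul (hWd x)
        exact h2.congr_deriv (by ring)
      have hFt : Tendsto (fun ξ => Real.exp (-b * ξ) * W ξ) atTop (nhds 0) := by
        refine squeeze_zero_norm (a := fun ξ => M * Real.exp (-b * ξ)) ?_ ?_
        · intro x
          rw [Real.norm_eq_abs, abs_mul, abs_of_pos (Real.exp_pos _)]
          calc Real.exp (-b * x) * |W x| ≤ Real.exp (-b * x) * M :=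
                mul_le_mul_of_nonneg_left (hM x) (Real.exp_pos _).le
            _ = M * Real.exp (-b * x) := mul_comm _ _
        · have h1 : Tendsto (fun ξ : ℝ => -b * ξ) atTop atBot :=
            tendsto_id.const_mul_atTop_of_neg (neg_neg_iff_pos.mpr hb)
          have h2 := (Real.tendsto_exp_atBot.comp h1).const_mul M
          simpa using h2
      have h0 : ∫ ξ in Ioi (0:ℝ),
          (Real.exp (-b * ξ) * v ξ - b * (Real.exp (-b * ξ) * W ξ)) = 0 := by
        rw [integral_Ioi_of_hasDerivAt_of_tendsto' hFd (hIv.sub (hIW.const_mul b)) hFt]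
        simp [hW0]
      rw [integral_sub hIv (hIW.const_mul b), integral_const_mul] at h0
      linarith
    -- decompose the main integral
    have hdecomp : ∫ ξ in Set.Ioi (0 : ℝ), Real.exp (-b * ξ) * w (η - ξ)
        = (∫ ξ in Ioi (0:ℝ), Real.exp (-b * ξ) * v ξ) + A * (1 / b) := by
      have heq : ∀ ξ : ℝ, Real.exp (-b * ξ) * w (η - ξ)
          = Real.exp (-b * ξ) * v ξ + A * Real.exp (-b * ξ) := by
        intro ξ; simp only [hv]; ring
      rw [show (fun ξ => Real.exp (-b * ξ) * w (η - ξ))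
          = fun ξ => Real.exp (-b * ξ) * v ξ + A * Real.exp (-b * ξ) from funext heq]
      rw [integral_add hIv (hexp_int.const_mul A), integral_const_mul, hexp_val]
    -- bound on ∫ exp(-bξ) W
    have hbound : |∫ ξ in Ioi (0:ℝ), Real.exp (-b * ξ) * W ξ| ≤ M * (1 / b) := by
      have := norm_integral_le_of_norm_le (f := fun ξ => Real.exp (-b * ξ) * W ξ)
        (g := fun ξ => M * Real.exp (-b * ξ)) (hexp_int.const_mul M) ?_
      · rw [Real.norm_eq_abs] at this
        rw [integral_const_mul, hexp_val] at this
        exact this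
      · filter_upwards with x
        rw [Real.norm_eq_abs, abs_mul, abs_of_pos (Real.exp_pos _)]
        calc Real.exp (-b * x) * |W x| ≤ Real.exp (-b * x) * M :=
              mul_le_mul_of_nonneg_left (hM x) (Real.exp_pos _).le
          _ = M * Real.exp (-b * x) := mul_comm _ _
    rw [hdecomp, hibp]
    have hA1 : b * (b * (∫ ξ in Ioi (0:ℝ), Real.exp (-b * ξ) * W ξ) + A * (1 / b)) - A
        = b * b * (∫ ξ in Ioi (0:ℝ), Real.exp (-b * ξ) * W ξ) := by
      field_simp
      ring
    rw [hA1, abs_mul, abs_of_pos (mul_pos hb hb)]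
    calc b * b * |∫ ξ in Ioi (0:ℝ), Real.exp (-b * ξ) * W ξ|
        ≤ b * b * (M * (1 / b)) :=
          mul_le_mul_of_nonneg_left hbound (mul_pos hb hb).le
      _ = M * b := by field_simp
  -- conclude via squeeze
  have habs : Tendsto (fun b : ℝ =>
      b * (∫ ξ in Set.Ioi (0 : ℝ), Real.exp (-b * ξ) * w (η - ξ)) - A)
      (nhdsWithin 0 (Set.Ioi 0)) (nhds 0) := by
    refine squeeze_zero_norm' (a := fun b => M * b) ?_ ?_
    · filter_upwards [self_mem_nhdsWithin] with b hb
      exact key b hb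
    · have h1 : Tendsto (fun b : ℝ => M * b) (nhdsWithin 0 (Set.Ioi 0)) (nhds (M * 0)) :=
        ((continuous_const.mul continuous_id).tendsto 0).mono_left nhdsWithin_le_nhds
      simpa using h1
  have := habs.add_const A
  simpa using this
end

section
/- Consider the Lotka–Volterra kinetics f(p,s) = γ·s − β, g(p,s) = α − p − s with α > 0, β > 0, γ > 0 and α·γ − β > 0, and the coexistence equilibrium s_e = β/γ, p_e = α − s_e (so s_e > 0 and p_e > 0). Set a₁₁ = f(p_e,s_e) + p_e·∂_p f(p_e,s_e), a₁₂ = p_e·∂_s f(p_e,s_e), a₂₁ = s_e·∂_p g(p_e,s_e), a₂₂ = g(p_e,s_e) + s_e·∂_s g(p_e,s_e) (explicitly: a₁₁ = 0, a₁₂ = γ·p_e, a₂₁ = −s_e, a₂₂ = −s_e). Then for all μ̂, δ̂, χ̂ ≥ 0 and all ĉ ∈ ℝ, every eigenvalue of the stability matrix A(ĉ) has negative real part; that is, every normal mode of the coexistence quasi-equilibrium is stable as long as the equilibrium exists. -/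
/-- for the Lotka–Volterra kinetics, every normal mode of the coexistence
quasi-equilibrium is stable as long as the equilibrium exists. -/
theorem lotka_volterra_coexistence_stable (α β γ : ℝ)
    (hα : 0 < α) (hβ : 0 < β) (hγ : 0 < γ) (hfeas : 0 < α * γ - β)
    (s_e p_e a11 a12 a21 a22 : ℝ)
    (hse : s_e = β / γ) (hpe : p_e = α - s_e)
    -- a₁₁ = f + p ∂_p f, a₁₂ = p ∂_s f, a₂₁ = s ∂_p g, a₂₂ = g + s ∂_s g at (p_e, s_e),
    -- which for f (p,s) = γ s − β, g (p,s) = α − p − s read explicitly: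
    (ha11 : a11 = 0) (ha12 : a12 = γ * p_e) (ha21 : a21 = -s_e) (ha22 : a22 = -s_e) :
    ∀ μ δ χ : ℝ, 0 ≤ μ → 0 ≤ δ → 0 ≤ χ → ∀ c : ℝ,
      ∀ lam : ℂ, IsEigenvalue (stabMatrix a11 a12 a21 a22 μ δ χ c) lam → lam.re < 0 := by
  intro μ δ χ hμ hδ hχ c lam h
  have hs : 0 < s_e := by rw [hse]; positivity
  have hp : 0 < p_e := by
    rw [hpe, hse]
    rw [sub_pos, div_lt_iff₀ hγ]
    nlinarith
  unfold IsEigenvalue stabMatrix at h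
  rw [Matrix.det_fin_two] at h
  simp only [Matrix.sub_apply, Matrix.smul_apply, Matrix.of_apply, Matrix.cons_val',
    Matrix.cons_val_zero, Matrix.cons_val_one, Matrix.head_cons, Matrix.head_fin_const,
    Matrix.one_apply_eq, Matrix.one_apply_ne, Complex.ext_iff] at h
  simp [Complex.ext_iff] at h
  obtain ⟨h1, h2⟩ := h
  subst ha11 ha12 ha21 ha22
  by_contra hr
  push_neg at hr
  set r := lam.re with hrdef
  set m := lam.im with hmdef
  have hY : 0 < r + s_e + δ := by linarith
  have key : (r + μ) * (r + s_e + δ)^2 + (r + μ) * m^2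
      + (s_e * (γ * p_e + χ)) * (r + s_e + δ) = 0 := by
    linear_combination (r + s_e + δ) * h1 + m * h2
  nlinarith [mul_pos (mul_pos hs (by nlinarith : (0:ℝ) < γ * p_e + χ)) hY,
    mul_nonneg (by linarith : (0:ℝ) ≤ r + μ) (sq_nonneg (r + s_e + δ)),
    mul_nonneg (by linarith : (0:ℝ) ≤ r + μ) (sq_nonneg m)]
end

section
/- Consider the ratio-dependent Arditi–Ginzburg kinetics f(p,s) = γ·s/(s+p) − β, g(p,s) = α − s − r·p/(s+p) with α > 0, γ > β > 0, r > 0. Define r₃ = α·γ²/(γ² − β²), r₂ = r₃ + γβ/(γ + β), r₁ = r₃ + αβγ/(γ² − β²), and assume 0 < r < r₁ (equivalently, the coexistence equilibrium s_e = α − r·(1 − β/γ) > 0, p_e = (γ/β − 1)·s_e is feasible). Set a₁₁ = f(p_e,s_e) + p_e·∂_p f(p_e,s_e), a₁₂ = p_e·∂_s f(p_e,s_e), a₂₁ = s_e·∂_p g(p_e,s_e), a₂₂ = g(p_e,s_e) + s_e·∂_s g(p_e,s_e). Then condition (C1), i.e. the three inequalities a₁₁a₂₂ − a₂₁a₁₂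 > 0, a₁₁ + a₂₂ < 0 and a₁₁a₂₂ < 0, holds if and only if r₃ < r < r₂. In particular, feasibility together with condition (C1) is equivalent to γ > β and r₃ < r < min(r₁, r₂). -/
set_option maxHeartbeats 1000000


/-- for the ratio-dependent Arditi–Ginzburg kinetics, condition (C1) at the
coexistence equilibrium holds iff `r₃ < r < r₂`; together with feasibility this is the
parameter domain `γ > β`, `r₃ < r < min (r₁, r₂)` of Theorem 1. -/
theorem arditi_ginzburg_C1_iff (α β γ r : ℝ)
    (hα : 0 < α) (hβ : 0 < β) (hγβ : β < γ) (hr : 0 < r)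
    (r₁ r₂ r₃ : ℝ)
    (hr₃ : r₃ = α * γ ^ 2 / (γ ^ 2 - β ^ 2))
    (hr₂ : r₂ = r₃ + γ * β / (γ + β))
    (hr₁ : r₁ = r₃ + α * β * γ / (γ ^ 2 - β ^ 2))
    (hfeas : r < r₁)
    (f g : ℝ × ℝ → ℝ)
    (hf : f = fun x : ℝ × ℝ => γ * x.2 / (x.2 + x.1) - β)
    (hg : g = fun x : ℝ × ℝ => α - x.2 - r * x.1 / (x.2 + x.1))
    (s_e p_e a11 a12 a21 a22 : ℝ)
    (hse : s_e = α - r * (1 - β / γ)) (hpe : p_e = (γ / β - 1) * s_e)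
    (ha11 : a11 = f (p_e, s_e) + p_e * fderiv ℝ f (p_e, s_e) (1, 0))
    (ha12 : a12 = p_e * fderiv ℝ f (p_e, s_e) (0, 1))
    (ha21 : a21 = s_e * fderiv ℝ g (p_e, s_e) (1, 0))
    (ha22 : a22 = g (p_e, s_e) + s_e * fderiv ℝ g (p_e, s_e) (0, 1)) :
    ((0 < a11 * a22 - a21 * a12 ∧ a11 + a22 < 0 ∧ a11 * a22 < 0) ↔ (r₃ < r ∧ r < r₂)) ∧
    ((0 < a11 * a22 - a21 * a12 ∧ a11 + a22 < 0 ∧ a11 * a22 < 0) ↔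
      (r₃ < r ∧ r < min r₁ r₂)) := by
  have hγ : 0 < γ := hβ.trans hγβ
  have hγ2 : (0:ℝ) < γ ^ 2 := by positivity
  have hγ2β2 : (0:ℝ) < γ ^ 2 - β ^ 2 := by nlinarith
  have hγβpos : (0:ℝ) < γ + β := by linarith
  -- feasibility gives s_e > 0
  have hγβne : γ - β ≠ 0 := by nlinarith
  have hr₁' : r₁ = (α * γ) / (γ - β) := by
    rw [hr₁, hr₃]
    rw [← add_div, div_eq_div_iff hγ2β2.ne' hγβne]
    ring
  have hs : 0 < s_e := by
    rw [hse]
    have h := hfeas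
    rw [hr₁', lt_div_iff₀ (by linarith : (0:ℝ) < γ - β)] at h
    have : r * (1 - β / γ) = r * (γ - β) / γ := by field_simp
    rw [this]
    rw [sub_pos, div_lt_iff₀ hγ]
    nlinarith
  have hp : 0 < p_e := by
    rw [hpe]
    have : 0 < γ / β - 1 := by rw [sub_pos, lt_div_iff₀ hβ]; linarith
    positivity
  have hsum : s_e + p_e = γ / β * s_e := by rw [hpe]; field_simp; ring
  have hpos : 0 < s_e + p_e := by linarith
  have hne : s_e + p_e ≠ 0 := hpos.ne'
  -- derivatives of f
  have hcf : HasFDerivAt (fun x : ℝ × ℝ => γ * x.2)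
      (γ • (ContinuousLinearMap.snd ℝ ℝ ℝ)) (p_e, s_e) := hasFDerivAt_snd.const_mul γ
  have hd : HasFDerivAt (fun x : ℝ × ℝ => x.2 + x.1)
      (ContinuousLinearMap.snd ℝ ℝ ℝ + ContinuousLinearMap.fst ℝ ℝ ℝ) (p_e, s_e) :=
    hasFDerivAt_snd.add hasFDerivAt_fst
  have hinv := (hasDerivAt_inv (x := s_e + p_e) hne).comp_hasFDerivAt (p_e, s_e) hd
  simp only [Function.comp_def] at hinv
  have hfd := ((hcf.mul hinv).sub_const β).fderiv
  have hfeq : f = fun x : ℝ × ℝ => γ * x.2 * (x.2 + x.1)⁻¹ - β := by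
    rw [hf]; funext x; rw [div_eq_mul_inv]
  have hDf1 : fderiv ℝ f (p_e, s_e) (1, 0) = -(γ * s_e) / (s_e + p_e) ^ 2 := by
    rw [hfeq]; erw [hfd]
    simp [ContinuousLinearMap.smul_apply, ContinuousLinearMap.add_apply]
    field_simp
  have hDf2 : fderiv ℝ f (p_e, s_e) (0, 1) = γ * p_e / (s_e + p_e) ^ 2 := by
    rw [hfeq]; erw [hfd]
    simp [ContinuousLinearMap.smul_apply, ContinuousLinearMap.add_apply]
    field_simp
    ring
  -- derivatives of g
  have hcg : HasFDerivAt (fun x : ℝ × ℝ => r * x.1)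
      (r • (ContinuousLinearMap.fst ℝ ℝ ℝ)) (p_e, s_e) := hasFDerivAt_fst.const_mul r
  have hgd := (((hasFDerivAt_const α (p_e, s_e)).sub hasFDerivAt_snd).sub
      (hcg.mul hinv)).fderiv
  have hgeq : g = fun x : ℝ × ℝ => (α - x.2) - r * x.1 * (x.2 + x.1)⁻¹ := by
    rw [hg]; funext x; rw [div_eq_mul_inv]
  have hDg1 : fderiv ℝ g (p_e, s_e) (1, 0) = -(r * s_e) / (s_e + p_e) ^ 2 := by
    rw [hgeq]; erw [hgd]
    simp [ContinuousLinearMap.smul_apply, ContinuousLinearMap.add_apply]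
    field_simp
    ring
  have hDg2 : fderiv ℝ g (p_e, s_e) (0, 1) = -1 + r * p_e / (s_e + p_e) ^ 2 := by
    rw [hgeq]; erw [hgd]
    simp [ContinuousLinearMap.smul_apply, ContinuousLinearMap.add_apply]
    field_simp
  -- function values vanish at equilibrium
  have hmne : γ / β * s_e ≠ 0 := mul_ne_zero (div_ne_zero hγ.ne' hβ.ne') hs.ne'
  have hfv : f (p_e, s_e) = 0 := by
    rw [hf]; simp only
    rw [hsum, sub_eq_zero, div_eq_iff hmne]
    field_simp
  have hq : r * p_e / (s_e + p_e) = r * (1 - β / γ) := by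
    rw [hsum, hpe, div_eq_iff hmne]
    field_simp
  have hgv : g (p_e, s_e) = 0 := by
    rw [hg]; simp only
    rw [hq, hse]; ring
  -- closed forms for the a_ij
  have hsum2 : (s_e + p_e) ^ 2 = (γ / β * s_e) ^ 2 := by rw [hsum]
  have hA11 : a11 = -(β * (γ - β)) / γ := by
    rw [ha11, hfv, hDf1, hsum2, hpe]
    field_simp
    ring
  have hA12 : a12 = (γ - β) ^ 2 / γ := by
    rw [ha12, hDf2, hsum2, hpe]
    field_simp
  have hA21 : a21 = -(r * β ^ 2) / γ ^ 2 := by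
    rw [ha21, hDg1, hsum2]
    field_simp
  have hA22 : a22 = -α + r * (γ ^ 2 - β ^ 2) / γ ^ 2 := by
    have h1 : a22 = -s_e + r * β * (γ - β) / γ ^ 2 := by
      rw [ha22, hgv, hDg2, hsum2, hpe]
      field_simp
      ring
    rw [h1, hse]
    field_simp
    ring
  -- determinant is always positive under feasibility
  have hdet : a11 * a22 - a21 * a12 = β * (γ - β) / γ * s_e := by
    rw [hA11, hA12, hA21, hA22, hse]
    field_simp
    ring
  have hdetpos : 0 < a11 * a22 - a21 * a12 := by
    rw [hdet]
    have : 0 < β * (γ - β) / γ := by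
      apply div_pos _ hγ; nlinarith
    exact mul_pos this hs
  have ha11neg : a11 < 0 := by
    rw [hA11]
    apply div_neg_of_neg_of_pos _ hγ
    nlinarith
  -- trace condition
  have htr : a11 + a22 = (r * (γ ^ 2 - β ^ 2) - (α * γ ^ 2 + γ * β * (γ - β))) / γ ^ 2 := by
    rw [hA11, hA22]
    field_simp
    ring
  have hr2' : r₂ = (α * γ ^ 2 + γ * β * (γ - β)) / (γ ^ 2 - β ^ 2) := by
    rw [hr₂, hr₃]
    field_simp
    ring
  have E2 : a11 + a22 < 0 ↔ r < r₂ := by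
    rw [htr, hr2', div_lt_iff₀ hγ2, zero_mul, sub_neg, lt_div_iff₀ hγ2β2]
  have E1 : a11 * a22 < 0 ↔ r₃ < r := by
    have e22 : (0 < a22) ↔ α * γ ^ 2 < r * (γ ^ 2 - β ^ 2) := by
      rw [hA22, show -α + r * (γ ^ 2 - β ^ 2) / γ ^ 2
            = r * (γ ^ 2 - β ^ 2) / γ ^ 2 - α by ring,
          sub_pos, lt_div_iff₀ hγ2]
    rw [hr₃, div_lt_iff₀ hγ2β2]
    constructor
    · intro h
      rcases mul_neg_iff.mp h with ⟨h1, _⟩ | ⟨_, h2⟩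
      · linarith
      · exact e22.mp h2
    · intro h
      exact mul_neg_of_neg_of_pos ha11neg (e22.mpr h)
  have main : (0 < a11 * a22 - a21 * a12 ∧ a11 + a22 < 0 ∧ a11 * a22 < 0) ↔
      (r₃ < r ∧ r < r₂) := by
    constructor
    · rintro ⟨_, h2, h3⟩
      exact ⟨E1.mp h3, E2.mp h2⟩
    · rintro ⟨h1, h2⟩
      exact ⟨hdetpos, E2.mpr h2, E1.mpr h1⟩
  refine ⟨main, main.trans ?_⟩
  constructor
  · rintro ⟨h1, h2⟩
    exact ⟨h1, lt_min hfeas h2⟩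
  · rintro ⟨h1, h2⟩
    exact ⟨h1, (lt_min_iff.mp h2).2⟩
end

section
/- Let real numbers a₁₁, a₁₂, a₂₁, a₂₂ satisfy condition (C1), let δ, μ̄, χ̄ ≥ 0 and M > 1 be real. For k > 0 define the threshold function c*²(k) := (Δ₂(k)²·M/(k²·(M − 1)))·( a₂₁·(k²·χ̄ + a₁₂)/((k²·δ − a₂₂)·(k²·μ̄ − a₁₁)) − 1 ), where Δ₂(k) = k²·(μ̄ + δ) − a₁₁ − a₂₂. Then c*²(k) → +∞ as k → 0⁺; that is, the spatially homogeneous mode remains stable no matter how fast the external signal propagates. -/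
open Filter

/-- the threshold `c*²(k)` tends to `+∞` as `k → 0⁺`: the spatially
homogeneous mode remains stable no matter how fast the external signal propagates. -/
theorem threshold_tendsto_atTop_at_zero_wavenumber (a11 a12 a21 a22 δ μ χ M : ℝ)
    -- Condition (C1)
    (hC1a : 0 < a11 * a22 - a21 * a12) (hC1b : a11 + a22 < 0) (hC1c : a11 * a22 < 0)
    (hδ : 0 ≤ δ) (hμ : 0 ≤ μ) (hχ : 0 ≤ χ) (hM : 1 < M) :
    Tendsto
      (fun k : ℝ =>
        (k ^ 2 * (μ + δ) - a11 - a22) ^ 2 * M / (k ^ 2 * (M - 1)) *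
          (a21 * (k ^ 2 * χ + a12) / ((k ^ 2 * δ - a22) * (k ^ 2 * μ - a11)) - 1))
      (nhdsWithin 0 (Set.Ioi 0)) atTop := by
  have hM1 : (0:ℝ) < M - 1 := by linarith
  have hM0 : (0:ℝ) < M := by linarith
  -- denominator k^2*(M-1) tends to 0 within positives
  have hden : Tendsto (fun k : ℝ => k ^ 2 * (M - 1)) (nhdsWithin 0 (Set.Ioi 0))
      (nhdsWithin 0 (Set.Ioi 0)) := by
    rw [tendsto_nhdsWithin_iff]
    constructor
    · have : Tendsto (fun k : ℝ => k ^ 2 * (M - 1)) (nhds 0) (nhds (0 ^ 2 * (M - 1))) := by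
        exact (continuous_pow 2).continuousAt.mul continuousAt_const
      simpa using this.mono_left nhdsWithin_le_nhds
    · filter_upwards [self_mem_nhdsWithin] with k hk
      exact mul_pos (pow_pos hk 2) hM1
  have hinv : Tendsto (fun k : ℝ => (k ^ 2 * (M - 1))⁻¹) (nhdsWithin 0 (Set.Ioi 0)) atTop :=
    tendsto_inv_nhdsGT_zero.comp hden
  -- numerator tends to a positive constant
  have hnum : Tendsto (fun k : ℝ => (k ^ 2 * (μ + δ) - a11 - a22) ^ 2 * M)
      (nhdsWithin 0 (Set.Ioi 0)) (nhds ((0 - a11 - a22) ^ 2 * M)) := by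
    have : ContinuousAt (fun k : ℝ => (k ^ 2 * (μ + δ) - a11 - a22) ^ 2 * M) 0 := by
      fun_prop
    simpa using this.tendsto.mono_left nhdsWithin_le_nhds
  have hnumpos : 0 < (0 - a11 - a22) ^ 2 * M := by
    apply mul_pos _ hM0
    have : (0:ℝ) - a11 - a22 > 0 := by linarith
    positivity
  have hfrac : Tendsto
      (fun k : ℝ => (k ^ 2 * (μ + δ) - a11 - a22) ^ 2 * M / (k ^ 2 * (M - 1)))
      (nhdsWithin 0 (Set.Ioi 0)) atTop := by
    have := Tendsto.pos_mul_atTop hnumpos hnum hinv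
    simpa [div_eq_mul_inv] using this
  -- second factor tends to a positive constant
  have hdne : ((0:ℝ) ^ 2 * δ - a22) * (0 ^ 2 * μ - a11) ≠ 0 := by
    simp only [ne_eq, zero_pow, zero_mul, zero_sub]
    intro h
    rcases mul_eq_zero.mp h with h1 | h1 <;> nlinarith
  have hg : Tendsto
      (fun k : ℝ => a21 * (k ^ 2 * χ + a12) / ((k ^ 2 * δ - a22) * (k ^ 2 * μ - a11)) - 1)
      (nhdsWithin 0 (Set.Ioi 0))
      (nhds (a21 * (0 ^ 2 * χ + a12) / ((0 ^ 2 * δ - a22) * (0 ^ 2 * μ - a11)) - 1)) := by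
    have : ContinuousAt
        (fun k : ℝ => a21 * (k ^ 2 * χ + a12) / ((k ^ 2 * δ - a22) * (k ^ 2 * μ - a11)) - 1)
        0 := by
      apply ContinuousAt.sub _ continuousAt_const
      exact ContinuousAt.div (by fun_prop) (by fun_prop) hdne
    exact this.tendsto.mono_left nhdsWithin_le_nhds
  have hLpos : 0 < a21 * (0 ^ 2 * χ + a12) / (((0:ℝ) ^ 2 * δ - a22) * (0 ^ 2 * μ - a11)) - 1 := by
    have h0 : ((0:ℝ) ^ 2 * δ - a22) * (0 ^ 2 * μ - a11) = a11 * a22 := by ring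
    rw [h0, sub_pos, lt_div_iff_of_neg hC1c]
    nlinarith
  exact Tendsto.atTop_mul_pos hLpos hfrac hg
end

section
/- Let f, g : ℝ × ℝ → ℝ be continuously differentiable, let h₀ : ℝ → ℝ be continuous and 2π-periodic, and fix b > 0. For a ∈ ℝ set ℰ_a(η) = exp(a·h₀(η)), W_a(η) := b·∫₀^∞ e^{−bξ}·ℰ_a(η − ξ) dξ / ℰ_a(η), and ℰ̄_a := W_a/⟨W_a⟩ (note W_a is continuous, positive and 2π-periodic, so ⟨W_a⟩ > 0 and ⟨ℰ̄_a⟩ = 1). Define F(p,s,a) = ⟨ℰ̄_a(·)·p·f(p·ℰ̄_a(·), s)⟩ and G(p,s,a) = ⟨s·g(p·ℰ̄_a(·), s)⟩. Suppose (p_e, s_e) ∈ ℝ² satisfies p_e·f(p_e,s_e) = 0 and s_e·g(p_e,s_e) = 0, and that the determinant of the matrix [[f + p·∂_p f, p·∂_s f],[s·∂_p g, g + s·∂_s g]] evaluated at (p_e, s_e) is nonzero. Then there exist ε > 0 and continuously differentiable functions p̄_e, s̄_e : (−ε, ε) → ℝ with p̄_e(0) = p_e and s̄_e(0) = s_e such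 that F(p̄_e(a), s̄_e(a), a) = 0 and G(p̄_e(a), s̄_e(a), a) = 0 for all a ∈ (−ε, ε). (Existence of a unique smooth one-parameter family of quasi-equilibria for Cattaneo's prey-taxis model.) -/
open MeasureTheory

/-- The profile `W_a(η) = b (R_b ℰ_a)(η) / ℰ_a(η)` with `ℰ_a(η) = exp (a h₀ η)`. -/
noncomputable def Wprof (h₀ : ℝ → ℝ) (b a η : ℝ) : ℝ :=
  b * (∫ ξ in Set.Ioi (0 : ℝ), Real.exp (-b * ξ) * Real.exp (a * h₀ (η - ξ)))
    / Real.exp (a * h₀ η)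

/-- The normalized profile `ℰ̄_a = W_a / ⟨W_a⟩` of Cattaneo's model. -/
noncomputable def EbarC (h₀ : ℝ → ℝ) (b a η : ℝ) : ℝ :=
  Wprof h₀ b a η / avg (Wprof h₀ b a)

open Set Metric intervalIntegral

theorem avg_const (c : ℝ) : avg (fun _ => c) = c := by
  simp [avg]
  field_simp

theorem key_smooth (e e' : ℝ → ℝ → ℝ)
    (hec : Continuous fun q : ℝ × ℝ => e q.1 q.2)
    (he'c : Continuous fun q : ℝ × ℝ => e' q.1 q.2)
    (hder : ∀ a η, HasDerivAt (fun t => e t η) (e' a η) a)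
    (Ψ : ℝ × ℝ × ℝ → ℝ) (hΨ : ContDiff ℝ 1 Ψ) :
    ContDiff ℝ 1 (fun x : (ℝ × ℝ) × ℝ => avg fun η => Ψ (x.1.1, x.1.2, e x.2 η)) ∧
    ∀ x₀ : (ℝ × ℝ) × ℝ, (∀ η, e x₀.2 η = 1) → ∀ v : ℝ × ℝ,
      fderiv ℝ (fun x : (ℝ × ℝ) × ℝ => avg fun η => Ψ (x.1.1, x.1.2, e x.2 η)) x₀ ((v, 0) : (ℝ × ℝ) × ℝ)
        = fderiv ℝ Ψ (x₀.1.1, x₀.1.2, 1) (v.1, v.2, 0) := by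
  classical
  set P := (ℝ × ℝ) × ℝ
  set πp : P →L[ℝ] ℝ :=
    (ContinuousLinearMap.fst ℝ ℝ ℝ).comp (ContinuousLinearMap.fst ℝ (ℝ × ℝ) ℝ) with hπp
  set πs : P →L[ℝ] ℝ :=
    (ContinuousLinearMap.snd ℝ ℝ ℝ).comp (ContinuousLinearMap.fst ℝ (ℝ × ℝ) ℝ) with hπs
  set πa : P →L[ℝ] ℝ := ContinuousLinearMap.snd ℝ (ℝ × ℝ) ℝ with hπa
  set L : ℝ → (P →L[ℝ] ℝ × ℝ × ℝ) := fun c => πp.prod (πs.prod (c • πa)) with hL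
  have hLcont : Continuous L := by
    have : L = fun c => πp.prod (πs.prod ((0:ℝ) • πa)) + c • ((0:P →L[ℝ] ℝ).prod ((0:P →L[ℝ] ℝ).prod πa)) := by
      funext c
      apply ContinuousLinearMap.ext
      intro x
      simp [hL, Prod.ext_iff]
    rw [this]
    exact continuous_const.add (continuous_id.smul continuous_const)
  set D : P → ℝ → (P →L[ℝ] ℝ) :=
    fun x η => (fderiv ℝ Ψ (x.1.1, x.1.2, e x.2 η)).comp (L (e' x.2 η)) with hD
  have hinner : Continuous fun q : P × ℝ => (q.1.1.1, q.1.1.2, e q.1.2 q.2) := by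
    refine continuous_fst.fst.fst.prodMk (continuous_fst.fst.snd.prodMk ?_)
    exact hec.comp (continuous_fst.snd.prodMk continuous_snd)
  have hDc : Continuous fun q : P × ℝ => D q.1 q.2 := by
    apply Continuous.clm_comp
    · exact (hΨ.continuous_fderiv one_ne_zero).comp hinner
    · exact hLcont.comp (he'c.comp (continuous_fst.snd.prodMk continuous_snd))
  have hmder : ∀ (x : P) (η : ℝ),
      HasFDerivAt (fun y : P => Ψ (y.1.1, y.1.2, e y.2 η)) (D x η) x := by
    intro x η
    have h1 : HasFDerivAt (fun y : P => y.1.1) πp x := by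
      exact (hasFDerivAt_fst (𝕜 := ℝ)).comp x (hasFDerivAt_fst (𝕜 := ℝ))
    have h2 : HasFDerivAt (fun y : P => y.1.2) πs x := by
      exact (hasFDerivAt_snd (𝕜 := ℝ)).comp x (hasFDerivAt_fst (𝕜 := ℝ))
    have h3 : HasFDerivAt (fun y : P => e y.2 η) (e' x.2 η • πa) x :=
      (hder x.2 η).comp_hasFDerivAt x (hasFDerivAt_snd (𝕜 := ℝ))
    have hin : HasFDerivAt (fun y : P => ((y.1.1, y.1.2, e y.2 η) : ℝ × ℝ × ℝ))
        (L (e' x.2 η)) x := h1.prodMk (h2.prodMk h3)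
    exact ((hΨ.differentiable one_ne_zero _).hasFDerivAt).comp x hin
  -- differentiability of the parametric interval integral
  have hQder : ∀ x₀ : P, HasFDerivAt (fun x : P => ∫ η in (0:ℝ)..(2*Real.pi), Ψ (x.1.1, x.1.2, e x.2 η))
      (∫ η in (0:ℝ)..(2*Real.pi), D x₀ η) x₀ := by
    intro x₀
    have hcont_int : ∀ x : P, Continuous fun η => Ψ (x.1.1, x.1.2, e x.2 η) := by
      intro x
      exact hΨ.continuous.comp (continuous_const.prodMk (continuous_const.prodMk
        (hec.comp (continuous_const.prodMk continuous_id))))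
    obtain ⟨C, hC⟩ : ∃ C : ℝ, ∀ q ∈ (closedBall x₀ 1) ×ˢ uIcc (0:ℝ) (2*Real.pi),
        ‖D q.1 q.2‖ ≤ C := by
      have hK : IsCompact ((closedBall x₀ 1) ×ˢ uIcc (0:ℝ) (2*Real.pi)) :=
        (isCompact_closedBall _ _).prod isCompact_uIcc
      exact hK.exists_bound_of_continuousOn hDc.continuousOn
    have key := intervalIntegral.hasFDerivAt_integral_of_dominated_loc_of_lip
      (F := fun (x : P) (η : ℝ) => Ψ (x.1.1, x.1.2, e x.2 η)) (F' := fun η => D x₀ η)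
      (x₀ := x₀) (a := (0:ℝ)) (b := 2*Real.pi) (μ := volume) (bound := fun _ => C)
      (ball_mem_nhds _ one_pos) ?_ ?_ ?_ ?_ ?_ ?_
    · exact key.2
    · exact Filter.Eventually.of_forall fun x => (hcont_int x).aestronglyMeasurable
    · exact (hcont_int x₀).intervalIntegrable _ _
    · exact (hDc.comp (continuous_const.prodMk continuous_id)).aestronglyMeasurable
    · apply Filter.Eventually.of_forall
      intro η hη
      apply (convex_ball x₀ 1).lipschitzOnWith_of_nnnorm_hasFDerivWithin_le
        (f' := fun x => D x η) (fun x hx => (hmder x η).hasFDerivWithinAt)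
      intro x hx
      rw [← NNReal.coe_le_coe, coe_nnnorm, Real.coe_nnabs]
      exact (hC (x, η) ⟨ball_subset_closedBall hx, uIoc_subset_uIcc hη⟩).trans (le_abs_self _)
    · exact intervalIntegrable_const
    · exact Filter.Eventually.of_forall fun η _ => hmder x₀ η
  set Q' : P → (P →L[ℝ] ℝ) := fun x => (1/(2*Real.pi)) • ∫ η in (0:ℝ)..(2*Real.pi), D x η with hQ'
  have hQ : ∀ x : P, HasFDerivAt (fun x : P => avg fun η => Ψ (x.1.1, x.1.2, e x.2 η)) (Q' x) x := by
    intro x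
    simpa only [avg] using (hQder x).const_mul (1/(2*Real.pi))
  have hQ'c : Continuous Q' := by
    refine (continuous_const (y := (1/(2*Real.pi) : ℝ))).smul ?_
    exact intervalIntegral.continuous_parametric_intervalIntegral_of_continuous' (f := D) hDc _ _
  constructor
  · rw [contDiff_one_iff_fderiv]
    refine ⟨fun x => (hQ x).differentiableAt, ?_⟩
    have : (fderiv ℝ fun x : P => avg fun η => Ψ (x.1.1, x.1.2, e x.2 η)) = Q' :=
      funext fun x => (hQ x).fderiv
    rw [this]; exact hQ'c
  · intro x₀ h1 v
    rw [(hQ x₀).fderiv]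
    have hDint : IntervalIntegrable (D x₀) volume 0 (2*Real.pi) :=
      (hDc.comp (continuous_const.prodMk continuous_id)).intervalIntegrable _ _
    have happly : (∫ η in (0:ℝ)..(2*Real.pi), D x₀ η) ((v, 0) : P)
        = ∫ η in (0:ℝ)..(2*Real.pi), (D x₀ η) ((v, 0) : P) :=
      ((ContinuousLinearMap.apply ℝ ℝ ((v, 0) : P)).intervalIntegral_comp_comm hDint).symm
    have hval : ∀ η : ℝ, (D x₀ η) ((v, 0) : P) = fderiv ℝ Ψ (x₀.1.1, x₀.1.2, 1) (v.1, v.2, 0) := by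
      intro η
      have : (L (e' x₀.2 η)) ((v, 0) : P) = ((v.1, v.2, 0) : ℝ × ℝ × ℝ) := by
        show ((v.1, v.2, e' x₀.2 η • (0:ℝ)) : ℝ × ℝ × ℝ) = (v.1, v.2, 0)
        simp
      simp only [hD, ContinuousLinearMap.comp_apply, this, h1 η]
    simp only [hQ', ContinuousLinearMap.smul_apply, happly, hval]
    rw [intervalIntegral.integral_const]
    simp only [smul_eq_mul, sub_zero]
    have hπ := Real.pi_ne_zero
    field_simp

noncomputable def Jc (h₀ : ℝ → ℝ) (b : ℝ) (c : ℝ → ℝ) (a η : ℝ) : ℝ :=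
  ∫ ξ in Set.Ioi (0:ℝ), Real.exp (-b * ξ) * (c (η - ξ) * Real.exp (a * h₀ (η - ξ)))

section Jc
variable {h₀ : ℝ → ℝ} {b M C : ℝ} {c : ℝ → ℝ}

theorem Jc_bound (hM : ∀ t, |h₀ t| ≤ M) (hCb : ∀ t, |c t| ≤ C)
    {a r : ℝ} (har : |a| ≤ r) (η ξ : ℝ) :
    ‖Real.exp (-b * ξ) * (c (η - ξ) * Real.exp (a * h₀ (η - ξ)))‖
      ≤ Real.exp (-b * ξ) * (C * Real.exp (r * M)) := by
  have h1 : a * h₀ (η - ξ) ≤ r * M := by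
    calc a * h₀ (η - ξ) ≤ |a * h₀ (η - ξ)| := le_abs_self _
    _ = |a| * |h₀ (η - ξ)| := abs_mul _ _
    _ ≤ r * M := by
        apply mul_le_mul har (hM _) (abs_nonneg _) ((abs_nonneg a).trans har)
  have h2 : |c (η - ξ)| ≤ C := hCb _
  rw [Real.norm_eq_abs, abs_mul, abs_mul, Real.abs_exp, Real.abs_exp]
  apply mul_le_mul_of_nonneg_left _ (Real.exp_pos _).le
  apply mul_le_mul h2 (Real.exp_le_exp.2 h1) (Real.exp_pos _).le ((abs_nonneg _).trans h2)

theorem Jc_integrableOn (hb : 0 < b) (hM : ∀ t, |h₀ t| ≤ M) (hc : Continuous c)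
    (hCb : ∀ t, |c t| ≤ C) (hh₀c : Continuous h₀) {a r : ℝ} (har : |a| ≤ r) (η : ℝ) :
    IntegrableOn (fun ξ => Real.exp (-b * ξ) * (c (η - ξ) * Real.exp (a * h₀ (η - ξ))))
      (Set.Ioi (0:ℝ)) := by
  apply Integrable.mono' ((exp_neg_integrableOn_Ioi 0 hb).mul_const (C * Real.exp (r * M)))
  · apply Continuous.aestronglyMeasurable
    fun_prop
  · exact Filter.Eventually.of_forall fun ξ => Jc_bound hM hCb har η ξ

theorem Jc_cont (hb : 0 < b) (hM : ∀ t, |h₀ t| ≤ M) (hc : Continuous c)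
    (hCb : ∀ t, |c t| ≤ C) (hh₀c : Continuous h₀) :
    Continuous fun q : ℝ × ℝ => Jc h₀ b c q.1 q.2 := by
  rw [continuous_iff_continuousAt]
  intro q₀
  apply continuousAt_of_dominated (bound := fun ξ => Real.exp (-b * ξ) * (C * Real.exp ((|q₀.1| + 1) * M)))
  · apply Filter.Eventually.of_forall
    intro q
    apply Continuous.aestronglyMeasurable
    fun_prop
  · have hopen : {q : ℝ × ℝ | |q.1| < |q₀.1| + 1} ∈ nhds q₀ := by
      apply (isOpen_lt (by fun_prop) continuous_const).mem_nhds
      simp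
    filter_upwards [hopen] with q hq
    exact Filter.Eventually.of_forall fun ξ => Jc_bound hM hCb (le_of_lt hq) q.2 ξ
  · exact (exp_neg_integrableOn_Ioi 0 hb).mul_const _
  · apply Filter.Eventually.of_forall
    intro ξ
    fun_prop

theorem Jc_hasDerivAt (hb : 0 < b) (hM : ∀ t, |h₀ t| ≤ M) (hc : Continuous c)
    (hCb : ∀ t, |c t| ≤ C) (hh₀c : Continuous h₀) (hC : 0 ≤ C) (a η : ℝ) :
    HasDerivAt (fun t => Jc h₀ b c t η) (Jc h₀ b (fun t => c t * h₀ t) a η) a := by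
  have key := _root_.hasDerivAt_integral_of_dominated_loc_of_deriv_le
    (F := fun (t : ℝ) (ξ : ℝ) => Real.exp (-b * ξ) * (c (η - ξ) * Real.exp (t * h₀ (η - ξ))))
    (F' := fun (t : ℝ) (ξ : ℝ) =>
      Real.exp (-b * ξ) * ((c (η - ξ) * h₀ (η - ξ)) * Real.exp (t * h₀ (η - ξ))))
    (x₀ := a) (μ := volume.restrict (Set.Ioi (0:ℝ)))
    (bound := fun ξ => Real.exp (-b * ξ) * ((C * M) * Real.exp ((|a| + 1) * M)))
    (ball_mem_nhds _ one_pos) ?_ ?_ ?_ ?_ ?_ ?_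
  · exact key.2
  · exact Filter.Eventually.of_forall fun t => (Continuous.aestronglyMeasurable (by fun_prop))
  · exact Jc_integrableOn hb hM hc hCb hh₀c le_rfl η
  · exact Continuous.aestronglyMeasurable (by fun_prop)
  · apply Filter.Eventually.of_forall
    intro ξ t ht
    have htr : |t| ≤ |a| + 1 := by
      have := mem_ball_iff_norm.1 ht
      have : |t - a| < 1 := by simpa [Real.norm_eq_abs] using this
      calc |t| = |a + (t - a)| := by ring_nf
      _ ≤ |a| + |t - a| := abs_add_le _ _
      _ ≤ |a| + 1 := by linarith
    have := Jc_bound (b := b) hM (c := fun t => c t * h₀ t) (C := C * M)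
      (fun t => by rw [abs_mul]; exact mul_le_mul (hCb t) (hM t) (abs_nonneg _) hC) htr η ξ
    simpa using this
  · exact (exp_neg_integrableOn_Ioi 0 hb).mul_const _
  · apply Filter.Eventually.of_forall
    intro ξ t ht
    have : HasDerivAt (fun t : ℝ => Real.exp (t * h₀ (η - ξ)))
        (Real.exp (t * h₀ (η - ξ)) * h₀ (η - ξ)) t := by
      simpa using ((hasDerivAt_id t).mul_const (h₀ (η - ξ))).exp
    have := ((this.const_mul (c (η - ξ))).const_mul (Real.exp (-b * ξ)))
    exact this.congr_deriv (by ring)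

end Jc

theorem Jc_pos {h₀ : ℝ → ℝ} {b M : ℝ} (hb : 0 < b) (hM : ∀ t, |h₀ t| ≤ M)
    (hh₀c : Continuous h₀) (a η : ℝ) :
    0 < Jc h₀ b (fun _ => 1) a η := by
  rw [Jc, setIntegral_pos_iff_support_of_nonneg_ae]
  · have hsupp : Set.Ioi (0:ℝ) ⊆
        (Function.support fun ξ => Real.exp (-b * ξ) * (1 * Real.exp (a * h₀ (η - ξ)))) := by
      intro ξ _
      simp only [Function.mem_support]
      positivity
    calc (0 : ENNReal) < volume (Set.Ioi (0:ℝ)) := by simp [Real.volume_Ioi]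
    _ = volume ((Function.support fun ξ => Real.exp (-b * ξ) * (1 * Real.exp (a * h₀ (η - ξ))))
          ∩ Set.Ioi (0:ℝ)) := by rw [Set.inter_eq_self_of_subset_right hsupp]
  · apply ae_restrict_of_forall_mem measurableSet_Ioi
    intro ξ _
    positivity
  · exact Jc_integrableOn (C := 1) hb hM continuous_const (fun t => by norm_num) hh₀c le_rfl η

theorem ebar_props {h₀ : ℝ → ℝ} {b : ℝ} (hh₀c : Continuous h₀)
    (hh₀per : Function.Periodic h₀ (2 * Real.pi)) (hb : 0 < b) :
    ∃ e' : ℝ → ℝ → ℝ,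
      Continuous (fun q : ℝ × ℝ => EbarC h₀ b q.1 q.2) ∧
      Continuous (fun q : ℝ × ℝ => e' q.1 q.2) ∧
      (∀ a η, HasDerivAt (fun t => EbarC h₀ b t η) (e' a η) a) ∧
      (∀ η, EbarC h₀ b 0 η = 1) := by
  classical
  -- bound on h₀
  obtain ⟨M, hM⟩ : ∃ M : ℝ, ∀ t, |h₀ t| ≤ M := by
    have hbd := hh₀per.isBounded_of_continuous Real.two_pi_pos.ne' hh₀c
    obtain ⟨M, hM⟩ := isBounded_iff_forall_norm_le.1 hbd
    exact ⟨M, fun t => hM _ (Set.mem_range_self t)⟩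
  have hMabs : ∀ t, |(fun t => (1:ℝ) * h₀ t) t| ≤ M := fun t => by
    simpa using hM t
  set c₁ : ℝ → ℝ := fun _ => (1:ℝ) with hc₁
  set J₀ : ℝ × ℝ → ℝ := fun q => Jc h₀ b c₁ q.1 q.2 with hJ₀
  set J₁ : ℝ × ℝ → ℝ := fun q => Jc h₀ b (fun t => c₁ t * h₀ t) q.1 q.2 with hJ₁
  have hc₁b : ∀ t, |c₁ t| ≤ (1:ℝ) := fun t => by simp [hc₁]
  have hc₁h : ∀ t, |c₁ t * h₀ t| ≤ |M| := fun t => by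
    simp only [hc₁, one_mul]
    exact (hM t).trans (le_abs_self M)
  have hJ₀c : Continuous J₀ := Jc_cont hb hM continuous_const hc₁b hh₀c
  have hJ₁c : Continuous J₁ := Jc_cont hb hM (by fun_prop) hc₁h hh₀c
  have hJ₀pos : ∀ q : ℝ × ℝ, 0 < J₀ q := fun q => Jc_pos hb hM hh₀c q.1 q.2
  have hJ₀der : ∀ a η, HasDerivAt (fun t => J₀ (t, η)) (J₁ (a, η)) a := fun a η =>
    Jc_hasDerivAt hb hM continuous_const hc₁b hh₀c zero_le_one a η
  -- the profile W and its derivative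
  set E : ℝ × ℝ → ℝ := fun q => Real.exp (q.1 * h₀ q.2) with hE
  have hEc : Continuous E := by fun_prop
  have hEpos : ∀ q, 0 < E q := fun q => Real.exp_pos _
  have hWrw : ∀ q : ℝ × ℝ, Wprof h₀ b q.1 q.2 = b * J₀ q / E q := by
    intro q
    simp only [Wprof, hJ₀, Jc, hc₁, one_mul, hE]
  set W' : ℝ × ℝ → ℝ := fun q =>
    (b * J₁ q * E q - b * J₀ q * (E q * h₀ q.2)) / (E q)^2 with hW'
  have hWc : Continuous fun q : ℝ × ℝ => Wprof h₀ b q.1 q.2 := by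
    have : (fun q : ℝ × ℝ => Wprof h₀ b q.1 q.2) = fun q => b * J₀ q / E q :=
      funext hWrw
    rw [this]
    exact (continuous_const.mul hJ₀c).div hEc fun q => (hEpos q).ne'
  have hW'c : Continuous W' := by
    apply Continuous.div
    · fun_prop
    · fun_prop
    · intro q
      exact pow_ne_zero _ (hEpos q).ne'
  have hWpos : ∀ q : ℝ × ℝ, 0 < Wprof h₀ b q.1 q.2 := by
    intro q
    rw [hWrw]
    have := hJ₀pos q
    have := hEpos q
    positivity
  have hWder : ∀ a η, HasDerivAt (fun t => Wprof h₀ b t η) (W' (a, η)) a := by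
    intro a η
    have hnum : HasDerivAt (fun t => b * J₀ (t, η)) (b * J₁ (a, η)) a :=
      (hJ₀der a η).const_mul b
    have hden : HasDerivAt (fun t => E (t, η)) (E (a, η) * h₀ η) a := by
      simpa [hE] using ((hasDerivAt_id a).mul_const (h₀ η)).exp
    have := hnum.div hden (hEpos (a, η)).ne'
    have heq : (fun t => Wprof h₀ b t η) = fun t => b * J₀ (t, η) / E (t, η) :=
      funext fun t => hWrw (t, η)
    rw [heq]
    exact this
  -- the average of W and its derivative
  set avgW : ℝ → ℝ := fun a => avg (Wprof h₀ b a) with havgW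
  set avgW' : ℝ → ℝ := fun a =>
    (1/(2*Real.pi)) * ∫ η in (0:ℝ)..(2*Real.pi), W' (a, η) with havgW'
  have havgWder : ∀ a₀ : ℝ, HasDerivAt avgW (avgW' a₀) a₀ := by
    intro a₀
    obtain ⟨Cb, hCb⟩ : ∃ Cb : ℝ, ∀ q ∈ (closedBall a₀ 1) ×ˢ uIcc (0:ℝ) (2*Real.pi),
        ‖W' q‖ ≤ Cb :=
      ((isCompact_closedBall _ _).prod isCompact_uIcc).exists_bound_of_continuousOn
        hW'c.continuousOn
    have key := intervalIntegral.hasDerivAt_integral_of_dominated_loc_of_deriv_le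
      (F := fun (t : ℝ) (η : ℝ) => Wprof h₀ b t η) (F' := fun (t : ℝ) (η : ℝ) => W' (t, η))
      (x₀ := a₀) (a := (0:ℝ)) (b := 2*Real.pi) (μ := volume) (bound := fun _ => Cb)
      (ball_mem_nhds _ one_pos) ?_ ?_ ?_ ?_ ?_ ?_
    · have := key.2.const_mul (1/(2*Real.pi))
      simpa only [havgW, avg, havgW'] using this
    · exact Filter.Eventually.of_forall fun t =>
        ((hWc.comp (continuous_const.prodMk continuous_id)).aestronglyMeasurable)
    · exact (hWc.comp (continuous_const.prodMk continuous_id)).intervalIntegrable _ _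
    · exact (hW'c.comp (continuous_const.prodMk continuous_id)).aestronglyMeasurable
    · apply Filter.Eventually.of_forall
      intro η hη t ht
      exact hCb (t, η) ⟨ball_subset_closedBall ht, uIoc_subset_uIcc hη⟩
    · exact intervalIntegrable_const
    · exact Filter.Eventually.of_forall fun η _ t _ => hWder t η
  have havgWc : Continuous avgW := by
    rw [continuous_iff_continuousAt]
    exact fun a => (havgWder a).continuousAt
  have havgW'c : Continuous avgW' :=
    continuous_const.mul (intervalIntegral.continuous_parametric_intervalIntegral_of_continuous'
      (f := fun (t : ℝ) (η : ℝ) => W' (t, η)) (by fun_prop) _ _)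
  have havgWpos : ∀ a : ℝ, 0 < avgW a := by
    intro a
    have h2π : (0:ℝ) < 2*Real.pi := Real.two_pi_pos
    have : 0 < ∫ η in (0:ℝ)..(2*Real.pi), Wprof h₀ b a η :=
      intervalIntegral_pos_of_pos
        ((hWc.comp (continuous_const.prodMk continuous_id)).intervalIntegrable _ _)
        (fun η => hWpos (a, η)) h2π
    simp only [havgW, avg]
    positivity
  -- assemble
  refine ⟨fun a η => (W' (a, η) * avgW a - Wprof h₀ b a η * avgW' a) / (avgW a)^2,
    ?_, ?_, ?_, ?_⟩
  · show Continuous fun q : ℝ × ℝ => Wprof h₀ b q.1 q.2 / avgW q.1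
    exact hWc.div (havgWc.comp continuous_fst) fun q => (havgWpos q.1).ne'
  · apply Continuous.div
    · fun_prop
    · fun_prop
    · exact fun q => pow_ne_zero _ (havgWpos q.1).ne'
  · intro a η
    exact (hWder a η).div (havgWder a) (havgWpos a).ne'
  · intro η
    have hWconst : ∀ η' : ℝ, Wprof h₀ b 0 η' = b * ∫ ξ in Set.Ioi (0:ℝ), Real.exp (-b * ξ) := by
      intro η'
      simp [Wprof]
    have : avgW 0 = Wprof h₀ b 0 η := by
      have : avgW 0 = avg (fun _ => b * ∫ ξ in Set.Ioi (0:ℝ), Real.exp (-b * ξ)) := by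
        simp only [havgW]
        exact congrArg avg (funext hWconst)
      rw [this, avg_const, hWconst]
    show Wprof h₀ b 0 η / avgW 0 = 1
    rw [this]
    exact div_self (hWpos (0, η)).ne'

theorem clm_eval2 (T : (ℝ × ℝ) →L[ℝ] ℝ) (x y : ℝ) :
    T (x, y) = x * T (1, 0) + y * T (0, 1) := by
  have h : ((x, y) : ℝ × ℝ) = x • ((1:ℝ), (0:ℝ)) + y • ((0:ℝ), (1:ℝ)) := by
    simp [Prod.ext_iff]
  rw [h, map_add, T.map_smul, T.map_smul, smul_eq_mul, smul_eq_mul]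

theorem psi_contDiff_f (f : ℝ × ℝ → ℝ) (hf : ContDiff ℝ 1 f) :
    ContDiff ℝ 1 (fun y : ℝ × ℝ × ℝ => y.2.2 * (y.1 * f (y.1 * y.2.2, y.2.1))) := by
  apply ContDiff.mul (by fun_prop)
  apply ContDiff.mul (by fun_prop)
  exact hf.comp (by fun_prop)

theorem psi_contDiff_g (g : ℝ × ℝ → ℝ) (hg : ContDiff ℝ 1 g) :
    ContDiff ℝ 1 (fun y : ℝ × ℝ × ℝ => y.2.1 * g (y.1 * y.2.2, y.2.1)) := by
  apply ContDiff.mul (by fun_prop)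
  exact hg.comp (by fun_prop)

theorem fderiv_psi_f (f : ℝ × ℝ → ℝ) (hf : ContDiff ℝ 1 f) (p s : ℝ) (v : ℝ × ℝ) :
    fderiv ℝ (fun y : ℝ × ℝ × ℝ => y.2.2 * (y.1 * f (y.1 * y.2.2, y.2.1))) (p, s, 1)
        ((v.1, v.2, 0) : ℝ × ℝ × ℝ)
      = f (p, s) * v.1 + p * fderiv ℝ f (p, s) v := by
  set Ψ : ℝ × ℝ × ℝ → ℝ := fun y => y.2.2 * (y.1 * f (y.1 * y.2.2, y.2.1)) with hΨdef
  have hΨ : ContDiff ℝ 1 Ψ := psi_contDiff_f f hf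
  set Lι : (ℝ × ℝ) →L[ℝ] (ℝ × ℝ × ℝ) :=
    (ContinuousLinearMap.fst ℝ ℝ ℝ).prod ((ContinuousLinearMap.snd ℝ ℝ ℝ).prod 0) with hLι
  have hι : HasFDerivAt (fun q : ℝ × ℝ => ((q.1, q.2, 1) : ℝ × ℝ × ℝ)) Lι (p, s) :=
    hasFDerivAt_fst.prodMk (hasFDerivAt_snd.prodMk (hasFDerivAt_const 1 _))
  have h1 : HasFDerivAt (fun q : ℝ × ℝ => Ψ (q.1, q.2, 1))
      ((fderiv ℝ Ψ (p, s, 1)).comp Lι) (p, s) :=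
    ((hΨ.differentiable one_ne_zero _).hasFDerivAt).comp _ hι
  have heq : (fun q : ℝ × ℝ => Ψ (q.1, q.2, 1)) = fun q : ℝ × ℝ => q.1 * f q := by
    funext q
    simp [hΨdef]
  have h2 : HasFDerivAt (fun q : ℝ × ℝ => q.1 * f q)
      (p • fderiv ℝ f (p, s) + f (p, s) • ContinuousLinearMap.fst ℝ ℝ ℝ) (p, s) := by
    have := (hasFDerivAt_fst (𝕜 := ℝ) (p := ((p, s) : ℝ × ℝ))).mul
      ((hf.differentiable one_ne_zero (p, s)).hasFDerivAt)
    exact this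
  rw [heq] at h1
  have huniq := h1.unique h2
  have : ((fderiv ℝ Ψ (p, s, 1)).comp Lι) v = fderiv ℝ Ψ (p, s, 1) (v.1, v.2, 0) := by
    simp only [ContinuousLinearMap.comp_apply]
    congr 1
  rw [← this, huniq]
  simp [mul_comm]
  ring

theorem fderiv_psi_g (g : ℝ × ℝ → ℝ) (hg : ContDiff ℝ 1 g) (p s : ℝ) (v : ℝ × ℝ) :
    fderiv ℝ (fun y : ℝ × ℝ × ℝ => y.2.1 * g (y.1 * y.2.2, y.2.1)) (p, s, 1)
        ((v.1, v.2, 0) : ℝ × ℝ × ℝ)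
      = g (p, s) * v.2 + s * fderiv ℝ g (p, s) v := by
  set Ψ : ℝ × ℝ × ℝ → ℝ := fun y => y.2.1 * g (y.1 * y.2.2, y.2.1) with hΨdef
  have hΨ : ContDiff ℝ 1 Ψ := psi_contDiff_g g hg
  set Lι : (ℝ × ℝ) →L[ℝ] (ℝ × ℝ × ℝ) :=
    (ContinuousLinearMap.fst ℝ ℝ ℝ).prod ((ContinuousLinearMap.snd ℝ ℝ ℝ).prod 0) with hLι
  have hι : HasFDerivAt (fun q : ℝ × ℝ => ((q.1, q.2, 1) : ℝ × ℝ × ℝ)) Lι (p, s) :=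
    hasFDerivAt_fst.prodMk (hasFDerivAt_snd.prodMk (hasFDerivAt_const 1 _))
  have h1 : HasFDerivAt (fun q : ℝ × ℝ => Ψ (q.1, q.2, 1))
      ((fderiv ℝ Ψ (p, s, 1)).comp Lι) (p, s) :=
    ((hΨ.differentiable one_ne_zero _).hasFDerivAt).comp _ hι
  have heq : (fun q : ℝ × ℝ => Ψ (q.1, q.2, 1)) = fun q : ℝ × ℝ => q.2 * g q := by
    funext q
    simp [hΨdef]
  have h2 : HasFDerivAt (fun q : ℝ × ℝ => q.2 * g q)
      (s • fderiv ℝ g (p, s) + g (p, s) • ContinuousLinearMap.snd ℝ ℝ ℝ) (p, s) := by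
    have := (hasFDerivAt_snd (𝕜 := ℝ) (p := ((p, s) : ℝ × ℝ))).mul
      ((hg.differentiable one_ne_zero (p, s)).hasFDerivAt)
    exact this
  rw [heq] at h1
  have huniq := h1.unique h2
  have : ((fderiv ℝ Ψ (p, s, 1)).comp Lι) v = fderiv ℝ Ψ (p, s, 1) (v.1, v.2, 0) := by
    simp only [ContinuousLinearMap.comp_apply]
    congr 1
  rw [← this, huniq]
  simp [mul_comm]
  ring


/-- existence of a smooth one-parameter family of quasi-equilibria for
Cattaneo's prey-taxis model. -/
theorem quasi_equilibria_cattaneo (f g : ℝ × ℝ → ℝ)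
    (hf : ContDiff ℝ 1 f) (hg : ContDiff ℝ 1 g)
    (h₀ : ℝ → ℝ) (hh₀c : Continuous h₀) (hh₀per : Function.Periodic h₀ (2 * Real.pi))
    (b : ℝ) (hb : 0 < b)
    (p_e s_e : ℝ)
    (heq1 : p_e * f (p_e, s_e) = 0) (heq2 : s_e * g (p_e, s_e) = 0)
    (hdet :
      (f (p_e, s_e) + p_e * fderiv ℝ f (p_e, s_e) (1, 0)) *
          (g (p_e, s_e) + s_e * fderiv ℝ g (p_e, s_e) (0, 1)) -
        (p_e * fderiv ℝ f (p_e, s_e) (0, 1)) *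
          (s_e * fderiv ℝ g (p_e, s_e) (1, 0)) ≠ 0) :
    ∃ ε > (0 : ℝ), ∃ pbar sbar : ℝ → ℝ,
      ContDiffOn ℝ 1 pbar (Set.Ioo (-ε) ε) ∧ ContDiffOn ℝ 1 sbar (Set.Ioo (-ε) ε) ∧
      pbar 0 = p_e ∧ sbar 0 = s_e ∧
      ∀ a ∈ Set.Ioo (-ε) ε,
        avg (fun η => EbarC h₀ b a η * (pbar a * f (pbar a * EbarC h₀ b a η, sbar a))) = 0 ∧
        avg (fun η => sbar a * g (pbar a * EbarC h₀ b a η, sbar a)) = 0 := by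
  classical
  obtain ⟨e', hec, he'c, hder, he0⟩ := ebar_props hh₀c hh₀per hb
  set P := (ℝ × ℝ) × ℝ
  set Ψf : ℝ × ℝ × ℝ → ℝ := fun y => y.2.2 * (y.1 * f (y.1 * y.2.2, y.2.1)) with hΨf
  set Ψg : ℝ × ℝ × ℝ → ℝ := fun y => y.2.1 * g (y.1 * y.2.2, y.2.1) with hΨg
  have hkf := key_smooth (fun a η => EbarC h₀ b a η) e' hec he'c hder Ψf (psi_contDiff_f f hf)
  have hkg := key_smooth (fun a η => EbarC h₀ b a η) e' hec he'c hder Ψg (psi_contDiff_g g hg)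
  set Qf : P → ℝ := fun x => avg fun η => Ψf (x.1.1, x.1.2, EbarC h₀ b x.2 η) with hQf
  set Qg : P → ℝ := fun x => avg fun η => Ψg (x.1.1, x.1.2, EbarC h₀ b x.2 η) with hQg
  set x₀ : P := ((p_e, s_e), 0) with hx₀
  have hdQf : ∀ v : ℝ × ℝ, fderiv ℝ Qf x₀ ((v, 0) : P)
      = f (p_e, s_e) * v.1 + p_e * fderiv ℝ f (p_e, s_e) v := fun v =>
    (hkf.2 x₀ (fun η => he0 η) v).trans (fderiv_psi_f f hf p_e s_e v)
  have hdQg : ∀ v : ℝ × ℝ, fderiv ℝ Qg x₀ ((v, 0) : P)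
      = g (p_e, s_e) * v.2 + s_e * fderiv ℝ g (p_e, s_e) v := fun v =>
    (hkg.2 x₀ (fun η => he0 η) v).trans (fderiv_psi_g g hg p_e s_e v)
  set Φ : P → P := fun x => ((Qf x, Qg x), x.2) with hΦdef
  have hΦ : ContDiff ℝ 1 Φ := (hkf.1.prodMk hkg.1).prodMk contDiff_snd
  set N : P →L[ℝ] P := ((fderiv ℝ Qf x₀).prod (fderiv ℝ Qg x₀)).prod
    (ContinuousLinearMap.snd ℝ (ℝ × ℝ) ℝ) with hNdef
  have hN : HasFDerivAt Φ N x₀ :=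
    (((hkf.1.differentiable one_ne_zero x₀).hasFDerivAt).prodMk
      ((hkg.1.differentiable one_ne_zero x₀).hasFDerivAt)).prodMk hasFDerivAt_snd
  -- kernel of N is trivial
  have hker : ∀ w : P, N w = 0 → w = 0 := by
    rintro ⟨⟨x, y⟩, da⟩ hw
    have hw3 : da = 0 := congrArg Prod.snd hw
    subst hw3
    have hw1 : fderiv ℝ Qf x₀ (((x, y), 0) : P) = 0 := congrArg (fun z : P => z.1.1) hw
    have hw2 : fderiv ℝ Qg x₀ (((x, y), 0) : P) = 0 := congrArg (fun z : P => z.1.2) hw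
    have h1 := (hdQf (x, y)).symm.trans hw1
    have h2 := (hdQg (x, y)).symm.trans hw2
    rw [clm_eval2 (fderiv ℝ f (p_e, s_e)) x y] at h1
    rw [clm_eval2 (fderiv ℝ g (p_e, s_e)) x y] at h2
    set a11 := f (p_e, s_e) + p_e * fderiv ℝ f (p_e, s_e) (1, 0) with ha11
    set a12 := p_e * fderiv ℝ f (p_e, s_e) (0, 1) with ha12
    set a21 := s_e * fderiv ℝ g (p_e, s_e) (1, 0) with ha21
    set a22 := g (p_e, s_e) + s_e * fderiv ℝ g (p_e, s_e) (0, 1) with ha22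
    have e1 : a11 * x + a12 * y = 0 := by rw [ha11, ha12]; linarith [h1]
    have e2 : a21 * x + a22 * y = 0 := by rw [ha21, ha22]; linarith [h2]
    have hx : x * (a11 * a22 - a12 * a21) = 0 := by linear_combination a22 * e1 - a12 * e2
    have hy : y * (a11 * a22 - a12 * a21) = 0 := by linear_combination a11 * e2 - a21 * e1
    have hX : x = 0 := by
      rcases mul_eq_zero.mp hx with h | h
      · exact h
      · exact absurd h hdet
    have hY : y = 0 := by
      rcases mul_eq_zero.mp hy with h | h
      · exact h
      · exact absurd h hdet
    simp [hX, hY, Prod.ext_iff]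
    rfl
  have hinj : Function.Injective N := by
    intro w1 w2 h12
    have := hker (w1 - w2) (by rw [map_sub, h12, sub_self])
    exact sub_eq_zero.mp this
  have hsurj : Function.Surjective N :=
    LinearMap.injective_iff_surjective.mp hinj
  set Neq : P ≃L[ℝ] P :=
    (LinearEquiv.ofBijective (↑N : P →ₗ[ℝ] P) ⟨hinj, hsurj⟩).toContinuousLinearEquiv with hNeqdef
  have hcoe : (Neq : P →L[ℝ] P) = N := by
    apply ContinuousLinearMap.ext
    intro w
    rfl
  have hNeq : HasFDerivAt Φ ((Neq : P ≃L[ℝ] P) : P →L[ℝ] P) x₀ := by rw [hcoe]; exact hN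
  have hΦat : ContDiffAt ℝ 1 Φ x₀ := hΦ.contDiffAt
  set V : P → P := hΦat.localInverse hNeq one_ne_zero with hVdef
  have hVx : V (Φ x₀) = x₀ := hΦat.localInverse_apply_image hNeq one_ne_zero
  have hVat : ContDiffAt ℝ 1 V (Φ x₀) := hΦat.to_localInverse hNeq one_ne_zero
  have hRI : ∀ᶠ y in nhds (Φ x₀), Φ (V y) = y :=
    (hΦat.hasStrictFDerivAt' hNeq one_ne_zero).eventually_right_inverse
  -- Φ x₀ = 0
  have hQfx₀ : Qf x₀ = 0 := by
    have : (fun η => Ψf (x₀.1.1, x₀.1.2, EbarC h₀ b x₀.2 η)) = fun _ => p_e * f (p_e, s_e) := by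
      funext η
      show Ψf (p_e, s_e, EbarC h₀ b 0 η) = p_e * f (p_e, s_e)
      rw [he0 η]
      simp [hΨf]
    rw [hQf]
    show avg (fun η => Ψf (x₀.1.1, x₀.1.2, EbarC h₀ b x₀.2 η)) = 0
    rw [this, avg_const, heq1]
  have hQgx₀ : Qg x₀ = 0 := by
    have : (fun η => Ψg (x₀.1.1, x₀.1.2, EbarC h₀ b x₀.2 η)) = fun _ => s_e * g (p_e, s_e) := by
      funext η
      show Ψg (p_e, s_e, EbarC h₀ b 0 η) = s_e * g (p_e, s_e)
      rw [he0 η]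
      simp [hΨg]
    rw [hQg]
    show avg (fun η => Ψg (x₀.1.1, x₀.1.2, EbarC h₀ b x₀.2 η)) = 0
    rw [this, avg_const, heq2]
  have hΦx₀ : Φ x₀ = (((0:ℝ), (0:ℝ)), (0:ℝ)) := by
    rw [hΦdef]
    show ((Qf x₀, Qg x₀), x₀.2) = (((0:ℝ), (0:ℝ)), (0:ℝ))
    rw [hQfx₀, hQgx₀]
  -- a neighborhood where V is C¹ and a right inverse
  obtain ⟨u, hu_nhds, hVsm⟩ := hVat.contDiffOn le_rfl (by norm_num)
  obtain ⟨T, hT_nhds, hT⟩ := hRI.exists_mem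
  set j : ℝ → P := fun a => (((0:ℝ), (0:ℝ)), a) with hj
  have hjc : ContDiff ℝ 1 j := (contDiff_const.prodMk contDiff_const).prodMk contDiff_id
  have hj0 : j 0 = Φ x₀ := by rw [hΦx₀]
  have hpre : j ⁻¹' (u ∩ T) ∈ nhds (0:ℝ) := by
    apply hjc.continuous.continuousAt.preimage_mem_nhds
    rw [hj0]
    exact Filter.inter_mem hu_nhds hT_nhds
  obtain ⟨ε, hε, hball⟩ := Metric.mem_nhds_iff.mp hpre
  have hsub : ∀ a ∈ Set.Ioo (-ε) ε, j a ∈ u ∩ T := by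
    intro a ha
    apply hball
    rw [Metric.mem_ball, Real.dist_eq, sub_zero, abs_lt]
    exact ⟨ha.1, ha.2⟩
  have hVj : ContDiffOn ℝ 1 (fun a => V (j a)) (Set.Ioo (-ε) ε) :=
    ContDiffOn.comp hVsm (hjc.contDiffOn) (fun a ha => (hsub a ha).1)
  refine ⟨ε, hε, fun a => (V (j a)).1.1, fun a => (V (j a)).1.2, ?_, ?_, ?_, ?_, ?_⟩
  · exact (contDiff_fst.comp contDiff_fst).comp_contDiffOn hVj
  · exact (contDiff_snd.comp contDiff_fst).comp_contDiffOn hVj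
  · show (V (j 0)).1.1 = p_e
    rw [hj0, hVx]
  · show (V (j 0)).1.2 = s_e
    rw [hj0, hVx]
  · intro a ha
    have hrinv : Φ (V (j a)) = j a := hT _ (hsub a ha).2
    set z : P := V (j a) with hz
    have hz2 : z.2 = a := congrArg Prod.snd hrinv
    have hzf : Qf z = 0 := congrArg (fun w : P => w.1.1) hrinv
    have hzg : Qg z = 0 := congrArg (fun w : P => w.1.2) hrinv
    have hzeq : (((z.1.1, z.1.2), a) : P) = z := by rw [← hz2]
    constructor
    · show Qf (((z.1.1, z.1.2), a) : P) = 0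
      rw [hzeq, hzf]
    · show Qg (((z.1.1, z.1.2), a) : P) = 0
      rw [hzeq, hzg]
end
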